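/- arXiv:2104.11095 — 10 statements merged into one kernel-verified Lean document; each statement's English description precedes it below -/
import Mathlib

section
/- Let (Ω, F, P) be a probability space and (x_n) a sequence of measurable functions Ω → ℝ^d such that sup_n |x_n(ω)| < ∞ for almost all ω. Then there exists a sequence (n_k) of ℕ-valued measurable functions with n_k(ω) < n_{k+1}(ω) for all ω and k, such that the sequence y_k(ω) := x_{n_k(ω)}(ω) converges almost surely to some measurable function x : Ω → ℝ^d. -/
/-!
For a bounded real sequence, `limsup` is a cluster point, and it depends measurably on `ω`.
Taking recursively the first index after the previous one at which the sequence is within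
`1 / (k + 1)` of a measurable cluster point gives measurable, strictly increasing random indices
along which the sequence converges to it. Doing this for one coordinate after another, each time
along the random subsequence found so far, makes every coordinate converge; a measurable version
of the almost sure limit then exists because `ℝ^d` is metrizable.
-/

open MeasureTheory Filter Topology Bornology

section RandomSubsequence

open scoped Classical

variable {Ω : Type*}

lemma exists_lt_and_or_eventually_not (g : Ω → ℕ) (Q : ℕ → Ω → Prop) (ω : Ω) :
    ∃ m, g ω < m ∧ (Q m ω ∨ ∀ᶠ j in atTop, ¬Q j ω) := by
  by_cases hQ : ∃ᶠ j in atTop, Q j ω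
  · obtain ⟨m, hm, hQm⟩ := frequently_atTop'.1 hQ (g ω)
    exact ⟨m, hm, .inl hQm⟩
  · exact ⟨g ω + 1, g ω |>.lt_succ_self, .inr (not_frequently.1 hQ)⟩

/-- The first index after `g ω` at which `Q · ω` holds, provided it holds infinitely often.
The escape clause `∀ᶠ j in atTop, ¬Q j ω` makes the search total, so no case split on `ω` is
needed and measurability follows from `measurable_find`. -/
noncomputable def nextIndex (g : Ω → ℕ) (Q : ℕ → Ω → Prop) (ω : Ω) : ℕ :=
  Nat.find (exists_lt_and_or_eventually_not g Q ω)

lemma lt_nextIndex (g : Ω → ℕ) (Q : ℕ → Ω → Prop) (ω : Ω) : g ω < nextIndex g Q ω :=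
  (Nat.find_spec (exists_lt_and_or_eventually_not g Q ω)).1

lemma nextIndex_spec {g : Ω → ℕ} {Q : ℕ → Ω → Prop} {ω : Ω} (hQ : ∃ᶠ j in atTop, Q j ω) :
    Q (nextIndex g Q ω) ω :=
  (Nat.find_spec (exists_lt_and_or_eventually_not g Q ω)).2.resolve_right hQ

noncomputable def nextIndexSeq (Q : ℕ → ℕ → Ω → Prop) : ℕ → Ω → ℕ
  | 0 => nextIndex (fun _ => 0) (Q 0)
  | k + 1 => nextIndex (nextIndexSeq Q k) (Q (k + 1))

lemma nextIndexSeq_spec {Q : ℕ → ℕ → Ω → Prop} {ω : Ω} (hQ : ∀ k, ∃ᶠ j in atTop, Q k j ω) :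
    ∀ k, Q k (nextIndexSeq Q k ω) ω
  | 0 => nextIndex_spec (hQ 0)
  | k + 1 => nextIndex_spec (hQ (k + 1))

variable [MeasurableSpace Ω]

lemma measurable_apply_index {β : Type*} [MeasurableSpace β] {a : ℕ → Ω → β} {b : Ω → ℕ}
    (ha : ∀ n, Measurable (a n)) (hb : Measurable b) : Measurable fun ω => a (b ω) ω :=
  (measurable_from_prod_countable_left (f := fun p : Ω × ℕ => a p.2 p.1) ha).comp
    (measurable_id.prodMk hb)

structure IsRandomSubseq (n : ℕ → Ω → ℕ) : Prop where
  measurable : ∀ k, Measurable (n k)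
  strictMono : ∀ ω, StrictMono fun k => n k ω

lemma IsRandomSubseq.comp {n m : ℕ → Ω → ℕ} (hn : IsRandomSubseq n) (hm : IsRandomSubseq m) :
    IsRandomSubseq fun k ω => n (m k ω) ω where
  measurable k := measurable_apply_index hn.measurable (hm.measurable k)
  strictMono ω := (hn.strictMono ω).comp (hm.strictMono ω)

lemma measurable_nextIndex {g : Ω → ℕ} {Q : ℕ → Ω → Prop} (hg : Measurable g)
    (hQ : ∀ m, MeasurableSet {ω | Q m ω}) : Measurable (nextIndex g Q) := by
  refine measurable_find _ fun m => ?_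
  have hev : MeasurableSet {ω | ∀ᶠ j in atTop, ¬Q j ω} := by
    simp only [eventually_atTop, Set.ofPred_exists, Set.ofPred_forall]
    exact .iUnion fun N => .iInter fun j => .iInter fun _ => (hQ j).compl
  exact (measurableSet_lt hg measurable_const).inter ((hQ m).union hev)

lemma isRandomSubseq_nextIndexSeq {Q : ℕ → ℕ → Ω → Prop}
    (hQ : ∀ k m, MeasurableSet {ω | Q k m ω}) : IsRandomSubseq (nextIndexSeq Q) where
  measurable k := by
    induction k with
    | zero => exact measurable_nextIndex measurable_const (hQ 0)
    | succ k ih => exact measurable_nextIndex ih (hQ (k + 1))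
  strictMono ω := strictMono_nat_of_lt_succ fun k => lt_nextIndex _ _ ω

lemma exists_isRandomSubseq_tendsto_of_mapClusterPt {E : Type*} [PseudoMetricSpace E]
    [MeasurableSpace E] [OpensMeasurableSpace E] [SecondCountableTopology E]
    {x : ℕ → Ω → E} (hx : ∀ m, Measurable (x m)) {L : Ω → E} (hL : Measurable L) :
    ∃ n, IsRandomSubseq n ∧ ∀ ω, MapClusterPt (L ω) atTop (fun m => x m ω) →
      Tendsto (fun k => x (n k ω) ω) atTop (𝓝 (L ω)) := by
  let Q : ℕ → ℕ → Ω → Prop := fun k m ω => dist (x m ω) (L ω) < 1 / ((k : ℝ) + 1)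
  refine ⟨nextIndexSeq Q, isRandomSubseq_nextIndexSeq fun k m =>
    measurableSet_lt ((hx m).dist hL) measurable_const, fun ω hω => ?_⟩
  have hfreq k : ∃ᶠ j in atTop, Q k j ω :=
    mapClusterPt_iff_frequently.1 hω _ (Metric.ball_mem_nhds _ Nat.one_div_pos_of_nat)
  exact tendsto_iff_dist_tendsto_zero.2 <| squeeze_zero (fun _ => dist_nonneg)
    (fun k => (nextIndexSeq_spec hfreq k).le) tendsto_one_div_add_atTop_nhds_zero_nat

lemma exists_isRandomSubseq_tendsto_real {z : ℕ → Ω → ℝ} (hz : ∀ m, Measurable (z m)) :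
    ∃ n, IsRandomSubseq n ∧ ∀ ω, IsBounded (Set.range fun m => z m ω) →
      ∃ l, Tendsto (fun k => z (n k ω) ω) atTop (𝓝 l) := by
  obtain ⟨n, hn, hconv⟩ := exists_isRandomSubseq_tendsto_of_mapClusterPt hz
    (Measurable.limsup hz)
  refine ⟨n, hn, fun ω hω => ⟨_, hconv ω ?_⟩⟩
  obtain ⟨hbelow, habove⟩ := isBounded_iff_bddBelow_bddAbove.1 hω
  exact MapClusterPt.limsup hbelow.isBoundedUnder_of_range.isCoboundedUnder_le
    habove.isBoundedUnder_of_range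

lemma exists_isRandomSubseq_forall_mem_tendsto_apply {ι : Type*} (s : Finset ι)
    {x : ℕ → Ω → ι → ℝ} (hx : ∀ m, Measurable (x m)) :
    ∃ n, IsRandomSubseq n ∧ ∀ ω, IsBounded (Set.range fun m => x m ω) →
      ∀ i ∈ s, ∃ l, Tendsto (fun k => x (n k ω) ω i) atTop (𝓝 l) := by
  induction s using Finset.induction_on with
  | empty => exact ⟨fun k _ => k, ⟨fun _ => measurable_const, fun _ => strictMono_id⟩, by simp⟩
  | insert a s _ ih =>
    obtain ⟨n, hn, hconv⟩ := ih
    obtain ⟨m, hm, hconv_a⟩ := exists_isRandomSubseq_tendsto_real (z := fun k ω => x (n k ω) ω a)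
      fun k => (measurable_pi_apply a).comp (measurable_apply_index hx (hn.measurable k))
    refine ⟨_, hn.comp hm, fun ω hω i hi => ?_⟩
    rcases Finset.mem_insert.1 hi with rfl | hi
    · refine hconv_a ω ((hω.image_eval i).subset ?_)
      rintro _ ⟨k, rfl⟩
      exact ⟨_, ⟨n k ω, rfl⟩, rfl⟩
    · obtain ⟨l, hl⟩ := hconv ω hω i hi
      exact ⟨l, hl.comp (hm.strictMono ω).tendsto_atTop⟩

lemma exists_isRandomSubseq_tendsto_pi {ι : Type*} [Finite ι]
    {x : ℕ → Ω → ι → ℝ} (hx : ∀ m, Measurable (x m)) :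
    ∃ n, IsRandomSubseq n ∧ ∀ ω, IsBounded (Set.range fun m => x m ω) →
      ∃ l, Tendsto (fun k => x (n k ω) ω) atTop (𝓝 l) := by
  have := Fintype.ofFinite ι
  obtain ⟨n, hn, hconv⟩ := exists_isRandomSubseq_forall_mem_tendsto_apply Finset.univ hx
  refine ⟨n, hn, fun ω hω => ?_⟩
  choose l hl using fun i => hconv ω hω i (Finset.mem_univ i)
  exact ⟨l, tendsto_pi_nhds.2 hl⟩

end RandomSubsequence

theorem randomized_bolzano_weierstrass_general
    {Ω : Type*} [MeasurableSpace Ω] (P : Measure Ω)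
    (d : ℕ) (x : ℕ → Ω → EuclideanSpace ℝ (Fin d))
    (hmeas : ∀ n, Measurable (x n))
    (hbdd : ∀ᵐ ω ∂P, ∃ C : ℝ, ∀ n, ‖x n ω‖ ≤ C) :
    ∃ nk : ℕ → Ω → ℕ,
      (∀ k, Measurable (nk k)) ∧
      (∀ k, ∀ ω, nk k ω < nk (k + 1) ω) ∧
      ∃ xlim : Ω → EuclideanSpace ℝ (Fin d), Measurable xlim ∧
        ∀ᵐ ω ∂P, Tendsto (fun k => x (nk k ω) ω) atTop (nhds (xlim ω)) := by
  obtain ⟨n, hn, hconv⟩ := exists_isRandomSubseq_tendsto_pi (x := fun m ω => (x m ω).ofLp)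
    fun m => (PiLp.continuous_ofLp 2 _).measurable.comp (hmeas m)
  have hconv_ae : ∀ᵐ ω ∂P, ∃ l, Tendsto (fun k => x (n k ω) ω) atTop (𝓝 l) := by
    filter_upwards [hbdd] with ω ⟨C, hC⟩
    have hω : IsBounded (Set.range fun m => x m ω) :=
      isBounded_iff_forall_norm_le.2 ⟨C, by simpa using hC⟩
    have hω' := (PiLp.lipschitzWith_ofLp 2 _).isBounded_image hω
    rw [← Set.range_comp] at hω'
    obtain ⟨l, hl⟩ := hconv ω hω'
    exact ⟨WithLp.toLp 2 l, ((PiLp.continuous_toLp 2 _).tendsto l).comp hl⟩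
  obtain ⟨xlim, hxlim, hlim⟩ := measurable_limit_of_tendsto_metrizable_ae
    (fun k => (measurable_apply_index hmeas (hn.measurable k)).aemeasurable) hconv_ae
  exact ⟨n, hn.measurable, fun k ω => hn.strictMono ω k.lt_succ_self, xlim, hxlim, hlim⟩

/-- Randomized Bolzano–Weierstrass theorem (Kabanov–Stricker). -/
theorem randomized_bolzano_weierstrass
    {Ω : Type*} [MeasurableSpace Ω] (P : Measure Ω) [IsProbabilityMeasure P]
    (d : ℕ) (x : ℕ → Ω → EuclideanSpace ℝ (Fin d))
    (hmeas : ∀ n, Measurable (x n))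
    (hbdd : ∀ᵐ ω ∂P, ∃ C : ℝ, ∀ n, ‖x n ω‖ ≤ C) :
    ∃ nk : ℕ → Ω → ℕ,
      (∀ k, Measurable (nk k)) ∧
      (∀ k, ∀ ω, nk k ω < nk (k + 1) ω) ∧
      ∃ xlim : Ω → EuclideanSpace ℝ (Fin d), Measurable xlim ∧
        ∀ᵐ ω ∂P, Tendsto (fun k => x (nk k ω) ω) atTop (nhds (xlim ω)) :=
  randomized_bolzano_weierstrass_general P d x hmeas hbdd
end

section
/- Let (Ω, F, P) be a probability space and (ξ_n) a sequence of nonnegative measurable functions on Ω that converges to 0 in probability. Then for every sequence (ε_k) of measurable functions with ε_k(ω) > 0 for all ω, nonincreasing in k and converging a.e. to 0, there exists a sequence (n_k) of ℕ-valued measurable functions with n_k(ω) < n_{k+1}(ω) for all ω, k such that ξ_{n_k(ω)}(ω) < ε_k(ω) for almost all ω, for every k. -/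
open MeasureTheory Filter

lemma measurable_sInf_pred {Ω : Type*} [MeasurableSpace Ω] {p : ℕ → Ω → Prop}
    (hp : ∀ i, MeasurableSet {ω | p i ω}) :
    Measurable fun ω => sInf {i | p i ω} := by
  apply measurable_to_countable'
  intro m
  have : (fun ω => sInf {i | p i ω}) ⁻¹' {m} =
      ({ω | p m ω} ∩ ⋂ i ∈ Finset.range m, {ω | ¬ p i ω}) ∪
      {ω | m = 0 ∧ ∀ i, ¬ p i ω} := by
    ext ω
    simp only [Set.mem_preimage, Set.mem_singleton_iff, Set.mem_union, Set.mem_inter_iff,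
      Set.mem_iInter, Set.mem_setOf_eq, Finset.mem_range]
    constructor
    · rintro rfl
      by_cases hne : ∃ i, p i ω
      · left
        refine ⟨Nat.sInf_mem hne, fun i hi => Nat.notMem_of_lt_sInf hi⟩
      · right
        push_neg at hne
        have : {i | p i ω} = ∅ := by ext i; simp [hne i]
        simp [this, Nat.sInf_empty, hne]
    · rintro (⟨hm, hlt⟩ | ⟨rfl, hall⟩)
      · refine le_antisymm (Nat.sInf_le hm) ?_
        by_contra h
        push_neg at h
        have hmem : sInf {i | p i ω} ∈ {i | p i ω} := Nat.sInf_mem ⟨m, hm⟩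
        exact hlt _ h hmem
      · have : {i | p i ω} = ∅ := by ext i; simp [hall i]
        simp [this, Nat.sInf_empty]
  rw [this]
  refine MeasurableSet.union (MeasurableSet.inter (hp m) ?_) ?_
  · exact MeasurableSet.biInter (Set.to_countable _) fun i _ => (hp i).compl
  · by_cases hm : m = 0
    · subst hm
      have : {ω : Ω | (0 : ℕ) = 0 ∧ ∀ i, ¬ p i ω} = ⋂ i, {ω | ¬ p i ω} := by
        ext ω; simp
      rw [this]
      exact MeasurableSet.iInter fun i => (hp i).compl
    · have : {ω : Ω | m = 0 ∧ ∀ i, ¬ p i ω} = ∅ := by ext ω; simp [hm]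
      rw [this]; exact MeasurableSet.empty

/-- Random-subsequence selection lemma (scalar version of Lemma 3.2). -/
theorem random_subsequence_selection
    {Ω : Type*} [MeasurableSpace Ω] (P : Measure Ω) [IsProbabilityMeasure P]
    (ξ : ℕ → Ω → ℝ) (hmeas : ∀ n, Measurable (ξ n))
    (hnonneg : ∀ n, ∀ ω, 0 ≤ ξ n ω)
    (htendsto : TendstoInMeasure P ξ atTop (fun _ => (0 : ℝ)))
    (ε : ℕ → Ω → ℝ) (hεmeas : ∀ k, Measurable (ε k))
    (hεpos : ∀ k, ∀ ω, 0 < ε k ω)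
    (hεanti : ∀ ω, ∀ k, ε (k + 1) ω ≤ ε k ω)
    (hεlim : ∀ᵐ ω ∂P, Tendsto (fun k => ε k ω) atTop (nhds 0)) :
    ∃ n : ℕ → Ω → ℕ,
      (∀ k, Measurable (n k)) ∧
      (∀ k, ∀ ω, n k ω < n (k + 1) ω) ∧
      ∀ k, ∀ᵐ ω ∂P, ξ (n k ω) ω < ε k ω := by
  obtain ⟨φ, hφmono, hφae⟩ := htendsto.exists_seq_tendsto_ae
  -- recursively defined random indices
  let j : ℕ → Ω → ℕ := fun k =>
    Nat.rec (fun ω => sInf {i | ξ (φ i) ω < ε 0 ω})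
      (fun k jk ω => max (jk ω + 1)
        (sInf {i | jk ω < i ∧ ξ (φ i) ω < ε (k + 1) ω})) k
  have hj0 : ∀ ω, j 0 ω = sInf {i | ξ (φ i) ω < ε 0 ω} := fun ω => rfl
  have hjs : ∀ k ω, j (k + 1) ω =
      max (j k ω + 1) (sInf {i | j k ω < i ∧ ξ (φ i) ω < ε (k + 1) ω}) := fun k ω => rfl
  have hjmeas : ∀ k, Measurable (j k) := by
    intro k
    induction k with
    | zero =>
      exact measurable_sInf_pred fun i =>
        measurableSet_lt (hmeas (φ i)) (hεmeas 0)
    | succ k ih =>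
      have h2 : Measurable fun ω => sInf {i | j k ω < i ∧ ξ (φ i) ω < ε (k + 1) ω} := by
        apply measurable_sInf_pred
        intro i
        have : {ω | j k ω < i ∧ ξ (φ i) ω < ε (k + 1) ω} =
            {ω | j k ω < i} ∩ {ω | ξ (φ i) ω < ε (k + 1) ω} := rfl
        rw [this]
        exact (measurableSet_lt ih measurable_const).inter
          (measurableSet_lt (hmeas (φ i)) (hεmeas (k + 1)))
      exact (ih.add_const 1).max h2
  have hjlt : ∀ k ω, j k ω < j (k + 1) ω := by
    intro k ω
    rw [hjs]
    exact lt_of_lt_of_le (Nat.lt_succ_self _) (le_max_left _ _)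
  -- the good a.e. set
  have hgood : ∀ᵐ ω ∂P, ∀ k, ξ (φ (j k ω)) ω < ε k ω := by
    filter_upwards [hφae] with ω hω
    have hexists : ∀ k N, ∃ i, N < i ∧ ξ (φ i) ω < ε k ω := by
      intro k N
      exact ((hω.eventually_lt_const (hεpos k ω)).and (eventually_gt_atTop N)).exists.imp
        fun i hi => ⟨hi.2, hi.1⟩
    intro k
    induction k with
    | zero =>
      obtain ⟨i, _, hi⟩ := hexists 0 0
      rw [hj0]
      exact Nat.sInf_mem (⟨i, hi⟩ : {i | ξ (φ i) ω < ε 0 ω}.Nonempty)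
    | succ k ih =>
      obtain ⟨i, hiN, hi⟩ := hexists (k + 1) (j k ω)
      have hne : {i | j k ω < i ∧ ξ (φ i) ω < ε (k + 1) ω}.Nonempty := ⟨i, hiN, hi⟩
      have hmem := Nat.sInf_mem hne
      have : j (k + 1) ω = sInf {i | j k ω < i ∧ ξ (φ i) ω < ε (k + 1) ω} := by
        rw [hjs]
        exact max_eq_right (Nat.succ_le_of_lt hmem.1)
      rw [this]
      exact hmem.2
  refine ⟨fun k ω => φ (j k ω), fun k => (measurable_from_nat.comp (hjmeas k) : _),
    fun k ω => hφmono (hjlt k ω), fun k => ?_⟩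
  filter_upwards [hgood] with ω hω using hω k
end

section
/- Let (Ω, F, P) be a probability space, x₁, …, xₙ elements of L⁰(F, ℝ^d), and ε : Ω → (0, ∞) measurable. Define uᵢ(x)(ω) = max(0, ε(ω) − |x(ω) − xᵢ(ω)|) for x ∈ L⁰(F, ℝ^d). If x satisfies: there is a measurable partition {A₁,…,Aₙ} of Ω with |x(ω) − xᵢ(ω)| < ε(ω) a.e. on Aᵢ for each i, then Σᵢ uᵢ(x)(ω) > 0 a.e., the Schauder projection P(x) := (Σᵢ uᵢ(x))⁻¹ Σᵢ uᵢ(x) xᵢ is well defined, and |x(ω) − P(x)(ω)| < ε(ω) for almost all ω. -/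
open MeasureTheory Filter

/-- Lemma 3.8(a)-(b): the random Schauder projection in `L⁰(F, ℝ^d)` is well defined and
approximates within `ε`. -/
theorem random_schauder_projection
    {Ω : Type*} [MeasurableSpace Ω] (P : Measure Ω) [IsProbabilityMeasure P]
    (d n : ℕ)
    (x : Fin n → Ω → EuclideanSpace ℝ (Fin d)) (hxmeas : ∀ i, Measurable (x i))
    (ε : Ω → ℝ) (hεmeas : Measurable ε) (hεpos : ∀ ω, 0 < ε ω)
    (p : Ω → EuclideanSpace ℝ (Fin d)) (hpmeas : Measurable p)
    (u : Fin n → Ω → ℝ)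
    (hu : ∀ i ω, u i ω = max 0 (ε ω - ‖p ω - x i ω‖))
    (A : Fin n → Set Ω)
    (hAmeas : ∀ i, MeasurableSet (A i))
    (hAdisj : Pairwise (Function.onFun Disjoint A))
    (hAcover : (⋃ i, A i) = Set.univ)
    (hclose : ∀ i, ∀ᵐ ω ∂P, ω ∈ A i → ‖p ω - x i ω‖ < ε ω) :
    (∀ᵐ ω ∂P, 0 < ∑ i, u i ω) ∧
    (∀ᵐ ω ∂P, ‖p ω - (∑ i, u i ω)⁻¹ • ∑ i, u i ω • x i ω‖ < ε ω) := by
  have haecl : ∀ᵐ ω ∂P, ∀ i, ω ∈ A i → ‖p ω - x i ω‖ < ε ω := ae_all_iff.2 hclose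
  have hpos : ∀ᵐ ω ∂P, 0 < ∑ i, u i ω := by
    filter_upwards [haecl] with ω hω
    have hmem : ω ∈ ⋃ i, A i := by rw [hAcover]; trivial
    obtain ⟨i, hi⟩ := Set.mem_iUnion.1 hmem
    have hlt := hω i hi
    have hui : 0 < u i ω := by
      rw [hu]; rw [lt_max_iff]; right; linarith
    exact Finset.sum_pos' (fun j _ => by rw [hu]; exact le_max_left _ _)
      ⟨i, Finset.mem_univ i, hui⟩
  refine ⟨hpos, ?_⟩
  filter_upwards [hpos] with ω hS
  have hnn : ∀ i, 0 ≤ u i ω := fun i => by rw [hu]; exact le_max_left _ _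
  set S := ∑ i, u i ω with hSdef
  have hSne : S ≠ 0 := ne_of_gt hS
  have key : p ω - S⁻¹ • ∑ i, u i ω • x i ω = S⁻¹ • ∑ i, u i ω • (p ω - x i ω) := by
    have : ∑ i, u i ω • (p ω - x i ω)
        = S • p ω - ∑ i, u i ω • x i ω := by
      simp [smul_sub, Finset.sum_sub_distrib, hSdef, Finset.sum_smul]
    rw [this, smul_sub, inv_smul_smul₀ hSne]
  rw [key]
  have hbound : ‖∑ i, u i ω • (p ω - x i ω)‖ < S * ε ω := by
    calc ‖∑ i, u i ω • (p ω - x i ω)‖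
        ≤ ∑ i, ‖u i ω • (p ω - x i ω)‖ := norm_sum_le _ _
      _ = ∑ i, u i ω * ‖p ω - x i ω‖ := by
          refine Finset.sum_congr rfl fun i _ => ?_
          rw [norm_smul, Real.norm_of_nonneg (hnn i)]
      _ < ∑ i, u i ω * ε ω := by
          obtain ⟨i, _, hui⟩ := Finset.exists_lt_of_sum_lt (by simpa using hS :
            ∑ i : Fin n, (0 : ℝ) < ∑ i, u i ω)
          refine Finset.sum_lt_sum (fun j _ => ?_) ⟨i, Finset.mem_univ i, ?_⟩
          · rcases eq_or_lt_of_le (hnn j) with h | h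
            · simp [← h]
            · have : ‖p ω - x j ω‖ < ε ω := by
                have := hu j ω
                by_contra hcon
                push_neg at hcon
                rw [hu j ω, max_eq_left (by linarith)] at h
                exact absurd h (lt_irrefl 0)
              exact mul_le_mul_of_nonneg_left this.le (hnn j)
          · have hi : 0 < u i ω := hui
            have : ‖p ω - x i ω‖ < ε ω := by
              by_contra hcon
              push_neg at hcon
              rw [hu i ω, max_eq_left (by linarith)] at hi
              exact absurd hi (lt_irrefl 0)
            exact (mul_lt_mul_iff_right₀ hi).2 this
      _ = S * ε ω := by rw [← Finset.sum_mul]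
  rw [norm_smul, Real.norm_of_nonneg (inv_nonneg.2 hS.le)]
  calc S⁻¹ * ‖∑ i, u i ω • (p ω - x i ω)‖ < S⁻¹ * (S * ε ω) := by
        exact (mul_lt_mul_iff_right₀ (inv_pos.2 hS)).2 hbound
    _ = ε ω := by field_simp
end

section
/- Let (Ω, F, P) be a probability space and G a nonempty subset of L⁰(F, ℝ^d) closed under countable measurable pasting (σ-stable). Let d(x, G)(ω) denote the essential infimum over y ∈ G of |x(ω) − y(ω)|. If x ∈ L⁰(F, ℝ^d) and ε : Ω → (0,∞) is measurable with d(x, G)(ω) < ε(ω) a.e., then there exists y ∈ G with |x(ω) − y(ω)| < ε(ω) for almost all ω. -/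
open MeasureTheory Filter

/-- A countable measurable partition of `Ω`. -/
def IsCountablePartition {Ω : Type*} [MeasurableSpace Ω] (A : ℕ → Set Ω) : Prop :=
  (∀ n, MeasurableSet (A n)) ∧ Pairwise (Function.onFun Disjoint A) ∧ (⋃ n, A n) = Set.univ

/-- Lemma 2.7(2): if the random distance from `x` to a σ-stable set `G` is `< ε` a.e.,
then some element of `G` is within `ε` of `x` a.e. -/
theorem random_ball_of_sigma_stable
    {Ω : Type*} [MeasurableSpace Ω] (P : Measure Ω) [IsProbabilityMeasure P]
    (d : ℕ) (G : Set (Ω → EuclideanSpace ℝ (Fin d)))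
    (hne : G.Nonempty) (hGmeas : ∀ y ∈ G, Measurable y)
    (hstable : ∀ (y : ℕ → Ω → EuclideanSpace ℝ (Fin d)), (∀ n, y n ∈ G) →
      ∀ (A : ℕ → Set Ω), IsCountablePartition A →
      ∀ g : Ω → EuclideanSpace ℝ (Fin d), (∀ n, ∀ ω ∈ A n, g ω = y n ω) → g ∈ G)
    (x : Ω → EuclideanSpace ℝ (Fin d)) (hxmeas : Measurable x)
    (ε : Ω → ℝ) (hεmeas : Measurable ε) (hεpos : ∀ ω, 0 < ε ω)
    (δ : Ω → ℝ) (hδmeas : Measurable δ)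
    -- δ is the essential infimum of the random distances ‖x − y‖, y ∈ G
    (hδlb : ∀ y ∈ G, ∀ᵐ ω ∂P, δ ω ≤ ‖x ω - y ω‖)
    (hδgreatest : ∀ δ' : Ω → ℝ, Measurable δ' →
      (∀ y ∈ G, ∀ᵐ ω ∂P, δ' ω ≤ ‖x ω - y ω‖) → ∀ᵐ ω ∂P, δ' ω ≤ δ ω)
    (hlt : ∀ᵐ ω ∂P, δ ω < ε ω) :
    ∃ y ∈ G, ∀ᵐ ω ∂P, ‖x ω - y ω‖ < ε ω := by
  classical
  set B : (Ω → EuclideanSpace ℝ (Fin d)) → Set Ω :=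
    fun z => {ω | ‖x ω - z ω‖ < ε ω} with hBdef
  have hBmeas : ∀ z ∈ G, MeasurableSet (B z) := fun z hz =>
    measurableSet_lt ((hxmeas.sub (hGmeas z hz)).norm) hεmeas
  set S : Set ℝ := (fun z => (P (B z)).toReal) '' G with hSdef
  have hSne : S.Nonempty := hne.image _
  have hSbdd : BddAbove S := by
    refine ⟨1, ?_⟩
    rintro r ⟨z, hz, rfl⟩
    have h1 : P (B z) ≤ 1 := prob_le_one
    calc (P (B z)).toReal ≤ (1 : ENNReal).toReal := ENNReal.toReal_mono (by simp) h1
      _ = 1 := by simp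
  obtain ⟨u, humono, hutend, humem⟩ := exists_seq_tendsto_sSup hSne hSbdd
  have hy : ∀ n, ∃ z ∈ G, (P (B z)).toReal = u n := fun n => humem n
  choose y hyG hyval using hy
  set U : Set Ω := ⋃ n, B (y n) with hUdef
  have hUmeas : MeasurableSet U := MeasurableSet.iUnion fun n => hBmeas _ (hyG n)
  set f' : ℕ → Set Ω := disjointed (fun n => B (y n)) with hf'def
  have hf'meas : ∀ n, MeasurableSet (f' n) :=
    MeasurableSet.disjointed fun n => hBmeas _ (hyG n)
  set A : ℕ → Set Ω := fun n => if n = 0 then Uᶜ ∪ f' 0 else f' n with hAdef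
  have hf'disj := disjoint_disjointed (fun n => B (y n))
  have hf'subU : ∀ n, f' n ⊆ U := fun n => by
    rw [hUdef]; exact (disjointed_subset _ n).trans (Set.subset_iUnion (fun k => B (y k)) n)
  have hApart : IsCountablePartition A := by
    refine ⟨fun n => ?_, fun i j hij => ?_, ?_⟩
    · by_cases h : n = 0
      · simp only [hAdef, h, if_pos rfl]
        exact hUmeas.compl.union (hf'meas 0)
      · simpa only [hAdef, if_neg h] using hf'meas n
    · simp only [Function.onFun, hAdef]
      rcases Nat.eq_zero_or_pos i with hi | hi
      · subst hi
        rw [if_pos rfl, if_neg (Ne.symm hij)]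
        refine Set.disjoint_union_left.mpr ⟨?_, hf'disj hij⟩
        exact Set.disjoint_left.mpr fun ω hω hω' => hω (hf'subU j hω')
      · rcases Nat.eq_zero_or_pos j with hj | hj
        · subst hj
          rw [if_neg (Nat.pos_iff_ne_zero.mp hi), if_pos rfl]
          refine Set.disjoint_union_right.mpr ⟨?_, hf'disj hij⟩
          exact Set.disjoint_right.mpr fun ω hω hω' => hω (hf'subU i hω')
        · rw [if_neg (Nat.pos_iff_ne_zero.mp hi), if_neg (Nat.pos_iff_ne_zero.mp hj)]
          exact hf'disj hij
    · apply Set.eq_univ_of_forall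
      intro ω
      by_cases hω : ω ∈ U
      · have : ω ∈ ⋃ n, f' n := by rwa [hf'def, iUnion_disjointed]
        obtain ⟨n, hn⟩ := Set.mem_iUnion.mp this
        apply Set.mem_iUnion.mpr ⟨n, ?_⟩
        by_cases h : n = 0
        · subst h; simp only [hAdef, if_pos rfl]; exact Or.inr hn
        · simpa only [hAdef, if_neg h] using hn
      · exact Set.mem_iUnion.mpr ⟨0, by simp only [hAdef, if_pos rfl]; exact Or.inl hω⟩
  have hAx : ∀ ω, ∃ n, ω ∈ A n := fun ω =>
    Set.mem_iUnion.mp (hApart.2.2 ▸ Set.mem_univ ω)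
  set g : Ω → EuclideanSpace ℝ (Fin d) := fun ω => y (Nat.find (hAx ω)) ω with hgdef
  have hg : ∀ n, ∀ ω ∈ A n, g ω = y n ω := by
    intro n ω hω
    have h1 := Nat.find_spec (hAx ω)
    rcases eq_or_ne (Nat.find (hAx ω)) n with h | h
    · rw [hgdef]; simp only; rw [h]
    · exact (Set.disjoint_left.mp (hApart.2.1 h) h1 hω).elim
  have hgG : g ∈ G := hstable y hyG A hApart g hg
  have hUsub : U ⊆ B g := by
    intro ω hω
    have h1 := Nat.find_spec (hAx ω)
    set n := Nat.find (hAx ω) with hn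
    have hgy : g ω = y n ω := hg n ω h1
    have hωB : ω ∈ B (y n) := by
      by_cases h : n = 0
      · rw [h] at h1
        simp only [hAdef, if_pos rfl] at h1
        rcases h1 with h1 | h1
        · exact absurd hω h1
        · rw [h]; exact (disjointed_subset _ 0) h1
      · simp only [hAdef, if_neg h] at h1
        exact disjointed_subset _ n h1
    show ‖x ω - g ω‖ < ε ω
    rw [hgy]; exact hωB
  have hPfin : ∀ s : Set Ω, P s ≠ ⊤ := fun s => measure_ne_top P s
  have hc_le : (P (B g)).toReal ≤ sSup S := le_csSup hSbdd ⟨g, hgG, rfl⟩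
  have hc_ge : sSup S ≤ (P (B g)).toReal := by
    refine le_of_tendsto hutend (Eventually.of_forall fun n => ?_)
    rw [← hyval n]
    exact ENNReal.toReal_mono (hPfin _)
      (measure_mono ((Set.subset_iUnion (fun n => B (y n)) n).trans hUsub))
  have hkey : ∀ z ∈ G, P ((B g)ᶜ ∩ B z) = 0 := by
    intro z hz
    by_contra h0
    set S₀ : Set Ω := (B g)ᶜ ∩ B z with hS₀def
    have hS₀meas : MeasurableSet S₀ := (hBmeas g hgG).compl.inter (hBmeas z hz)
    set w : Ω → EuclideanSpace ℝ (Fin d) := fun ω => if ω ∈ S₀ then z ω else g ω with hwdef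
    have hwG : w ∈ G := by
      refine hstable (fun n => if n = 0 then z else g)
        (fun n => by by_cases h : n = 0 <;> simp [h, hz, hgG])
        (fun n => if n = 0 then S₀ else if n = 1 then S₀ᶜ else ∅) ⟨?_, ?_, ?_⟩ w ?_
      · intro n
        by_cases h : n = 0
        · simp [h, hS₀meas]
        · by_cases h1 : n = 1 <;> simp [h, h1, hS₀meas, hS₀meas.compl]
      · intro i j hij
        simp only [Function.onFun]
        rcases eq_or_ne i 0 with hi | hi
        · subst hi
          rw [if_pos rfl, if_neg (Ne.symm hij)]
          by_cases hj : j = 1 <;> simp [hj, disjoint_compl_right]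
        · rcases eq_or_ne j 0 with hj | hj
          · subst hj
            rw [if_neg hi, if_pos rfl]
            by_cases hi1 : i = 1 <;> simp [hi1, disjoint_compl_left]
          · rw [if_neg hi, if_neg hj]
            rcases eq_or_ne i 1 with hi1 | hi1
            · subst hi1
              rw [if_pos rfl, if_neg (Ne.symm hij)]
              simp
            · rw [if_neg hi1]; simp
      · apply Set.eq_univ_of_forall
        intro ω
        by_cases hω : ω ∈ S₀
        · exact Set.mem_iUnion.mpr ⟨0, by simp [hω]⟩
        · exact Set.mem_iUnion.mpr ⟨1, by simp [hω]⟩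
      · intro n ω hω
        rcases eq_or_ne n 0 with rfl | h
        · have hωS : ω ∈ S₀ := by simpa using hω
          show w ω = (if (0:ℕ) = 0 then z else g) ω
          rw [hwdef, if_pos rfl]; simp only; rw [if_pos hωS]
        · rcases eq_or_ne n 1 with rfl | h1
          · have hωS : ω ∉ S₀ := by simpa using hω
            show w ω = (if (1:ℕ) = 0 then z else g) ω
            rw [hwdef, if_neg one_ne_zero]; simp only; rw [if_neg hωS]
          · exact absurd (by simpa [h, h1] using hω) (Set.notMem_empty ω)
    have hsub : B g ∪ S₀ ⊆ B w := by
      intro ω hω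
      rcases hω with hω | hω
      · have hωS : ω ∉ S₀ := fun h => h.1 hω
        show ‖x ω - w ω‖ < ε ω
        rw [hwdef]; simp only; rw [if_neg hωS]; exact hω
      · show ‖x ω - w ω‖ < ε ω
        rw [hwdef]; simp only; rw [if_pos hω]; exact hω.2
    have hdisj : Disjoint (B g) S₀ :=
      Set.disjoint_left.mpr fun ω hω hω' => hω'.1 hω
    have hlt2 : P (B g) < P (B w) := by
      calc P (B g) < P (B g) + P S₀ := by
            exact ENNReal.lt_add_right (hPfin _) h0
        _ = P (B g ∪ S₀) := (measure_union hdisj hS₀meas).symm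
        _ ≤ P (B w) := measure_mono hsub
    have hlt3 : (P (B g)).toReal < (P (B w)).toReal :=
      (ENNReal.toReal_lt_toReal (hPfin _) (hPfin _)).mpr hlt2
    have : (P (B w)).toReal ≤ (P (B g)).toReal :=
      (le_csSup hSbdd ⟨w, hwG, rfl⟩).trans hc_ge
    linarith
  set δ' : Ω → ℝ := fun ω => if ω ∈ B g then δ ω else ε ω with hδ'def
  have hδ'meas : Measurable δ' := Measurable.ite (hBmeas g hgG) hδmeas hεmeas
  have hδ'lb : ∀ z ∈ G, ∀ᵐ ω ∂P, δ' ω ≤ ‖x ω - z ω‖ := by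
    intro z hz
    have h1 : ∀ᵐ ω ∂P, ω ∉ (B g)ᶜ ∩ B z := measure_eq_zero_iff_ae_notMem.mp (hkey z hz)
    filter_upwards [hδlb z hz, h1] with ω hω1 hω2
    by_cases hω : ω ∈ B g
    · rw [hδ'def]; simp only; rw [if_pos hω]; exact hω1
    · rw [hδ'def]; simp only; rw [if_neg hω]
      have : ω ∉ B z := fun h => hω2 ⟨hω, h⟩
      exact not_lt.mp this
  have hδ'le : ∀ᵐ ω ∂P, δ' ω ≤ δ ω := hδgreatest δ' hδ'meas hδ'lb
  refine ⟨g, hgG, ?_⟩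
  filter_upwards [hδ'le, hlt] with ω h1 h2
  by_contra h
  have hω : ω ∉ B g := h
  rw [hδ'def] at h1; simp only at h1; rw [if_neg hω] at h1
  linarith
end

section
/- Let (Ω, F, P) be a probability space and G a nonempty σ-stable subset of L⁰(F, ℝ^d) that is random sequentially compact: every sequence in G has a random subsequence (x_{n_k(ω)}(ω)) with strictly increasing measurable indices n_k converging in probability to some element of L⁰(F, ℝ^d). Then G is a.s. bounded: there exists a measurable ξ ≥ 0 such that |x(ω)| ≤ ξ(ω) a.e. for every x ∈ G. -/
open MeasureTheory Filter

set_option maxHeartbeats 2000000 in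
/-- Lemma 2.7(5): a σ-stable random sequentially compact set is a.s. bounded. -/
theorem random_sequentially_compact_implies_as_bounded
    {Ω : Type*} [MeasurableSpace Ω] (P : Measure Ω) [IsProbabilityMeasure P]
    (d : ℕ) (G : Set (Ω → EuclideanSpace ℝ (Fin d)))
    (hne : G.Nonempty) (hGmeas : ∀ x ∈ G, Measurable x)
    (hstable : ∀ (y : ℕ → Ω → EuclideanSpace ℝ (Fin d)), (∀ n, y n ∈ G) →
      ∀ (A : ℕ → Set Ω), IsCountablePartition A →
      ∀ g : Ω → EuclideanSpace ℝ (Fin d), (∀ n, ∀ ω ∈ A n, g ω = y n ω) → g ∈ G)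
    (hcompact : ∀ x : ℕ → Ω → EuclideanSpace ℝ (Fin d), (∀ n, x n ∈ G) →
      ∃ nk : ℕ → Ω → ℕ,
        (∀ k, Measurable (nk k)) ∧
        (∀ k, ∀ ω, nk k ω < nk (k + 1) ω) ∧
        ∃ y : Ω → EuclideanSpace ℝ (Fin d), Measurable y ∧
          TendstoInMeasure P (fun k ω => x (nk k ω) ω) atTop y) :
    ∃ ξ : Ω → ℝ, Measurable ξ ∧ (∀ ω, 0 ≤ ξ ω) ∧
      ∀ x ∈ G, ∀ᵐ ω ∂P, ‖x ω‖ ≤ ξ ω := by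
  classical
  have harctan_nonneg : ∀ t : ℝ, 0 ≤ t → 0 ≤ Real.arctan t := by
    intro t ht
    have := Real.arctan_strictMono.monotone ht
    rwa [Real.arctan_zero] at this
  have harctan_bdd : ∀ t : ℝ, Real.arctan t ≤ Real.pi / 2 :=
    fun t => (Real.arctan_lt_pi_div_two t).le
  have hmeasnorm : ∀ x ∈ G, Measurable fun ω => Real.arctan ‖x ω‖ := fun x hx =>
    Real.continuous_arctan.measurable.comp (hGmeas x hx).norm
  have hint : ∀ x ∈ G, Integrable (fun ω => Real.arctan ‖x ω‖) P := by
    intro x hx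
    refine (integrable_const (Real.pi / 2)).mono' (hmeasnorm x hx).aestronglyMeasurable ?_
    filter_upwards with ω
    rw [Real.norm_eq_abs, abs_of_nonneg (harctan_nonneg _ (norm_nonneg _))]
    exact harctan_bdd _
  -- the supremum of integrals
  set S : Set ℝ := (fun x : Ω → EuclideanSpace ℝ (Fin d) => ∫ ω, Real.arctan ‖x ω‖ ∂P) '' G with hSdef
  have hSne : S.Nonempty := hne.image _
  have hSbdd : BddAbove S := by
    refine ⟨Real.pi / 2, ?_⟩
    rintro a ⟨x, hxG, rfl⟩
    calc ∫ ω, Real.arctan ‖x ω‖ ∂P ≤ ∫ _, Real.pi / 2 ∂P :=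
          integral_mono (hint x hxG) (integrable_const _) fun ω => harctan_bdd _
      _ = Real.pi / 2 := by simp
  set s : ℝ := sSup S with hsdef
  have hzub : ∀ w ∈ G, ∫ ω, Real.arctan ‖w ω‖ ∂P ≤ s :=
    fun w hw => le_csSup hSbdd ⟨w, hw, rfl⟩
  -- approximating sequence
  have hx : ∀ n : ℕ, ∃ x, x ∈ G ∧ s - 1 / (n + 1) < ∫ ω, Real.arctan ‖x ω‖ ∂P := by
    intro n
    have hlt : s - 1 / ((n : ℝ) + 1) < s := by
      have : (0 : ℝ) < 1 / ((n : ℝ) + 1) := by positivity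
      linarith
    obtain ⟨a, ⟨x, hxG, rfl⟩, ha⟩ := exists_lt_of_lt_csSup hSne hlt
    exact ⟨x, hxG, ha⟩
  choose x xG hxlt using hx
  -- pointwise max stays in G
  have key : ∀ u, u ∈ G → ∀ v, v ∈ G →
      ∃ w, w ∈ G ∧ ∀ ω, ‖w ω‖ = max ‖u ω‖ ‖v ω‖ := by
    intro u hu v hv
    set B : Set Ω := {ω | ‖v ω‖ ≤ ‖u ω‖} with hBdef
    have hB : MeasurableSet B := measurableSet_le (hGmeas v hv).norm (hGmeas u hu).norm
    set A : ℕ → Set Ω := fun n => if n = 0 then B else if n = 1 then Bᶜ else ∅ with hAdef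
    set y : ℕ → Ω → EuclideanSpace ℝ (Fin d) := fun n => if n = 0 then u else v with hydef
    set g : Ω → EuclideanSpace ℝ (Fin d) := fun ω => if ω ∈ B then u ω else v ω with hgdef
    have hgG : g ∈ G := by
      refine hstable y (fun n => by by_cases h : n = 0 <;> simp [hydef, h, hu, hv]) A
        ⟨?_, ?_, ?_⟩ g ?_
      · intro n
        rcases n with _ | _ | n <;> simp [hAdef, hB, hB.compl]
      · intro i j hij
        simp only [Function.onFun, hAdef]
        rcases i with _ | _ | i <;> rcases j with _ | _ | j <;>
          simp_all [Set.disjoint_left]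
      · ext ω
        simp only [Set.mem_iUnion, Set.mem_univ, iff_true]
        by_cases h : ω ∈ B
        · exact ⟨0, by simp [hAdef, h]⟩
        · exact ⟨1, by simp [hAdef, h]⟩
      · intro n ω hω
        rcases n with _ | _ | n
        · simp only [hAdef, if_pos rfl] at hω
          simp [hgdef, hydef, hω]
        · simp only [hAdef] at hω
          norm_num at hω
          simp [hgdef, hydef, hω]
        · simp [hAdef] at hω
    refine ⟨g, hgG, fun ω => ?_⟩
    by_cases h : ω ∈ B
    · have h' : ‖v ω‖ ≤ ‖u ω‖ := h
      simp [hgdef, h, max_eq_left h']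
    · have h' : ‖u ω‖ ≤ ‖v ω‖ := le_of_not_ge h
      simp [hgdef, h, max_eq_right h']
  -- totalized max operation
  have key' : ∀ u v : Ω → EuclideanSpace ℝ (Fin d), ∃ w : Ω → EuclideanSpace ℝ (Fin d),
      u ∈ G → v ∈ G → w ∈ G ∧ ∀ ω, ‖w ω‖ = max ‖u ω‖ ‖v ω‖ := by
    intro u v
    by_cases hu : u ∈ G
    · by_cases hv : v ∈ G
      · obtain ⟨w, h1, h2⟩ := key u hu v hv
        exact ⟨w, fun _ _ => ⟨h1, h2⟩⟩
      · exact ⟨u, fun _ h => absurd h hv⟩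
    · exact ⟨u, fun h => absurd h hu⟩
  choose M hM using key'
  -- monotone sequence
  let z : ℕ → Ω → EuclideanSpace ℝ (Fin d) := fun n => Nat.rec (x 0) (fun n zn => M zn (x (n + 1))) n
  have hzsucc_def : ∀ n, z (n + 1) = M (z n) (x (n + 1)) := fun n => rfl
  have hzG : ∀ n, z n ∈ G := by
    intro n
    induction n with
    | zero => exact xG 0
    | succ n ih =>
      rw [hzsucc_def]
      exact (hM (z n) (x (n + 1)) ih (xG (n + 1))).1
  have hznorm : ∀ n ω, ‖z (n + 1) ω‖ = max ‖z n ω‖ ‖x (n + 1) ω‖ := by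
    intro n ω
    rw [hzsucc_def]
    exact (hM (z n) (x (n + 1)) (hzG n) (xG (n + 1))).2 ω
  have hzmono : ∀ ω, Monotone fun n => ‖z n ω‖ := by
    intro ω
    refine monotone_nat_of_le_succ fun n => ?_
    rw [hznorm n ω]; exact le_max_left _ _
  have hzge : ∀ n ω, ‖x n ω‖ ≤ ‖z n ω‖ := by
    intro n ω
    cases n with
    | zero => exact le_rfl
    | succ n => rw [hznorm n ω]; exact le_max_right _ _
  have hzint_lb : ∀ n : ℕ, s - 1 / ((n : ℝ) + 1) < ∫ ω, Real.arctan ‖z n ω‖ ∂P := by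
    intro n
    refine lt_of_lt_of_le (hxlt n) ?_
    exact integral_mono (hint _ (xG n)) (hint _ (hzG n))
      fun ω => Real.arctan_strictMono.monotone (hzge n ω)
  -- compactness
  obtain ⟨nk, hnkm, hnkmono, y, hym, hconv⟩ := hcompact z hzG
  have hnk_ge : ∀ k ω, k ≤ nk k ω := by
    intro k ω
    induction k with
    | zero => exact Nat.zero_le _
    | succ k ih => exact Nat.succ_le_of_lt (lt_of_le_of_lt ih (hnkmono k ω))
  obtain ⟨ns, hns, hae⟩ := hconv.exists_seq_tendsto_ae
  have haecv : ∀ᵐ ω ∂P, Tendsto (fun n => ‖z n ω‖) atTop (nhds ‖y ω‖) := by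
    filter_upwards [hae] with ω hω
    have hnorm : Tendsto (fun j => ‖z (nk (ns j) ω) ω‖) atTop (nhds ‖y ω‖) := hω.norm
    have hidx : Tendsto (fun j => nk (ns j) ω) atTop atTop := by
      refine tendsto_atTop_mono (fun j => ?_) tendsto_id
      exact le_trans (hns.le_apply) (hnk_ge (ns j) ω)
    rcases tendsto_of_monotone (hzmono ω) with hT | ⟨l, hl⟩
    · exact absurd (hT.comp hidx) (not_tendsto_atTop_of_tendsto_nhds hnorm)
    · have h2 : Tendsto (fun j => ‖z (nk (ns j) ω) ω‖) atTop (nhds l) := hl.comp hidx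
      rwa [tendsto_nhds_unique h2 hnorm] at hl
  refine ⟨fun ω => ‖y ω‖, hym.norm, fun ω => norm_nonneg _, ?_⟩
  -- main claim
  intro x' hx'
  set f : Ω → ℝ := fun ω => Real.arctan (max ‖y ω‖ ‖x' ω‖) - Real.arctan ‖y ω‖ with hfdef
  set F : ℕ → Ω → ℝ :=
    fun n ω => Real.arctan (max ‖z n ω‖ ‖x' ω‖) - Real.arctan ‖z n ω‖ with hFdef
  have hFmeas : ∀ n, AEStronglyMeasurable (F n) P := by
    intro n
    refine (Measurable.aestronglyMeasurable ?_)
    exact (Real.continuous_arctan.measurable.comp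
      ((hGmeas _ (hzG n)).norm.max (hGmeas _ hx').norm)).sub (hmeasnorm _ (hzG n))
  have habs : ∀ (a b : ℝ), 0 ≤ a → 0 ≤ b → |Real.arctan a - Real.arctan b| ≤ Real.pi := by
    intro a b ha hb
    have h1 := harctan_nonneg a ha
    have h2 := harctan_nonneg b hb
    have h3 := harctan_bdd a
    have h4 := harctan_bdd b
    have hpi := Real.pi_pos
    rw [abs_le]
    constructor <;> linarith
  have hbound : ∀ n, ∀ᵐ ω ∂P, ‖F n ω‖ ≤ Real.pi := by
    intro n
    filter_upwards with ω
    rw [Real.norm_eq_abs]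
    exact habs _ _ (le_max_of_le_left (norm_nonneg _)) (norm_nonneg _)
  have hlim : ∀ᵐ ω ∂P, Tendsto (fun n => F n ω) atTop (nhds (f ω)) := by
    filter_upwards [haecv] with ω hcv
    have h1 : Tendsto (fun n => max ‖z n ω‖ ‖x' ω‖) atTop (nhds (max ‖y ω‖ ‖x' ω‖)) :=
      hcv.max tendsto_const_nhds
    exact ((Real.continuous_arctan.tendsto _).comp h1).sub
      ((Real.continuous_arctan.tendsto _).comp hcv)
  have hDCT : Tendsto (fun n => ∫ ω, F n ω ∂P) atTop (nhds (∫ ω, f ω ∂P)) :=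
    tendsto_integral_of_dominated_convergence (fun _ => Real.pi) hFmeas
      (integrable_const _) hbound hlim
  have hFle : ∀ n : ℕ, ∫ ω, F n ω ∂P ≤ 1 / ((n : ℝ) + 1) := by
    intro n
    obtain ⟨hwG, hwnorm⟩ := hM (z n) x' (hzG n) hx'
    have heq : ∫ ω, F n ω ∂P =
        (∫ ω, Real.arctan ‖M (z n) x' ω‖ ∂P) - ∫ ω, Real.arctan ‖z n ω‖ ∂P := by
      rw [← integral_sub (hint _ hwG) (hint _ (hzG n))]
      refine integral_congr_ae (Filter.Eventually.of_forall fun ω => ?_)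
      simp [hFdef, hwnorm ω]
    rw [heq]
    have h1 := hzub _ hwG
    have h2 := (hzint_lb n).le
    linarith
  have h0 : Tendsto (fun n : ℕ => 1 / ((n : ℝ) + 1)) atTop (nhds 0) :=
    tendsto_one_div_add_atTop_nhds_zero_nat
  have hintle : ∫ ω, f ω ∂P ≤ 0 := le_of_tendsto_of_tendsto' hDCT h0 hFle
  have hfnonneg : ∀ ω, 0 ≤ f ω := by
    intro ω
    simp only [hfdef, sub_nonneg]
    exact Real.arctan_strictMono.monotone (le_max_left _ _)
  have hfint : Integrable f P := by
    refine (integrable_const Real.pi).mono' ?_ ?_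
    · exact ((Real.continuous_arctan.measurable.comp
        (hym.norm.max (hGmeas _ hx').norm)).sub
        (Real.continuous_arctan.measurable.comp hym.norm)).aestronglyMeasurable
    · filter_upwards with ω
      rw [Real.norm_eq_abs]
      exact habs _ _ (le_max_of_le_left (norm_nonneg _)) (norm_nonneg _)
  have hzero : ∫ ω, f ω ∂P = 0 :=
    le_antisymm hintle (integral_nonneg hfnonneg)
  have hfae : f =ᵐ[P] 0 :=
    (integral_eq_zero_iff_of_nonneg hfnonneg hfint).mp hzero
  filter_upwards [hfae] with ω hω
  have : Real.arctan (max ‖y ω‖ ‖x' ω‖) = Real.arctan ‖y ω‖ := by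
    have := hω
    simp only [hfdef, Pi.zero_apply] at this
    linarith [sub_eq_zero.mp this]
  have hmax : max ‖y ω‖ ‖x' ω‖ = ‖y ω‖ := Real.arctan_injective this
  exact max_eq_left_iff.mp hmax
end

section
/- Let (Ω, F, P) be a probability space and G a σ-stable subset of L⁰(F, ℝ^d). Suppose f : G → L⁰(F, ℝ) is σ-stable (f(Σ_n 1_{A_n} x_n) = Σ_n 1_{A_n} f(x_n) for countable measurable partitions) and continuous for convergence in probability, and G is σ-stable, closed in probability, and random sequentially compact. Then there exists x₀ ∈ G with f(x₀)(ω) = esssup{f(x)(ω) : x ∈ G} a.e., i.e. f attains its essential supremum on G. -/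
open MeasureTheory Filter

/-- Lemma 2.7(4): a σ-stable, continuous-in-probability function on a σ-stable, closed,
random sequentially compact set attains its essential supremum. -/
theorem sigma_stable_continuous_attains_esssup
    {Ω : Type*} [MeasurableSpace Ω] (P : Measure Ω) [IsProbabilityMeasure P]
    (d : ℕ) (G : Set (Ω → EuclideanSpace ℝ (Fin d)))
    (hne : G.Nonempty) (hGmeas : ∀ x ∈ G, Measurable x)
    (hstable : ∀ (y : ℕ → Ω → EuclideanSpace ℝ (Fin d)), (∀ n, y n ∈ G) →
      ∀ (A : ℕ → Set Ω), IsCountablePartition A →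
      ∀ g : Ω → EuclideanSpace ℝ (Fin d), (∀ n, ∀ ω ∈ A n, g ω = y n ω) → g ∈ G)
    (hclosed : ∀ y : ℕ → Ω → EuclideanSpace ℝ (Fin d), (∀ n, y n ∈ G) →
      ∀ x : Ω → EuclideanSpace ℝ (Fin d), Measurable x →
      TendstoInMeasure P y atTop x → x ∈ G)
    (hcompact : ∀ x : ℕ → Ω → EuclideanSpace ℝ (Fin d), (∀ n, x n ∈ G) →
      ∃ nk : ℕ → Ω → ℕ,
        (∀ k, Measurable (nk k)) ∧
        (∀ k, ∀ ω, nk k ω < nk (k + 1) ω) ∧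
        ∃ y ∈ G, TendstoInMeasure P (fun k ω => x (nk k ω) ω) atTop y)
    (f : (Ω → EuclideanSpace ℝ (Fin d)) → Ω → ℝ)
    (hfmeas : ∀ x ∈ G, Measurable (f x))
    -- f is σ-stable
    (hfstable : ∀ (y : ℕ → Ω → EuclideanSpace ℝ (Fin d)), (∀ n, y n ∈ G) →
      ∀ (A : ℕ → Set Ω), IsCountablePartition A →
      ∀ g : Ω → EuclideanSpace ℝ (Fin d), (∀ n, ∀ ω ∈ A n, g ω = y n ω) → g ∈ G →
      ∀ n, ∀ᵐ ω ∂P, ω ∈ A n → f g ω = f (y n) ω)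
    -- f is continuous for convergence in probability
    (hfcont : ∀ x ∈ G, ∀ y : ℕ → Ω → EuclideanSpace ℝ (Fin d), (∀ n, y n ∈ G) →
      TendstoInMeasure P y atTop x →
      TendstoInMeasure P (fun n => f (y n)) atTop (f x)) :
    ∃ x₀ ∈ G, ∀ x ∈ G, ∀ᵐ ω ∂P, f x ω ≤ f x₀ ω := by

  classical
  -- Integrability of arctan ∘ f x
  have hint : ∀ x ∈ G, Integrable (fun ω => Real.arctan (f x ω)) P := by
    intro x hx
    refine Integrable.mono' (integrable_const (Real.pi / 2))
      ((Real.measurable_arctan.comp (hfmeas x hx)).aestronglyMeasurable) ?_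
    filter_upwards with ω
    rw [Real.norm_eq_abs, abs_le]
    exact ⟨(Real.neg_pi_div_two_lt_arctan _).le, (Real.arctan_lt_pi_div_two _).le⟩
  set I : (Ω → EuclideanSpace ℝ (Fin d)) → ℝ := fun x => ∫ ω, Real.arctan (f x ω) ∂P with hIdef
  set S : Set ℝ := I '' G with hSdef
  have hSne : S.Nonempty := hne.image _
  have hSbdd : BddAbove S := by
    refine ⟨Real.pi / 2, ?_⟩
    rintro s ⟨x, hx, rfl⟩
    calc I x ≤ ∫ _ω, Real.pi / 2 ∂P :=
          integral_mono_ae (hint x hx) (integrable_const _)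
            (Filter.Eventually.of_forall fun ω => (Real.arctan_lt_pi_div_two _).le)
      _ = Real.pi / 2 := by simp
  set α : ℝ := sSup S with hαdef
  -- G is directed: max combination
  have hmax : ∀ a ∈ G, ∀ b ∈ G, ∃ c, c ∈ G ∧ ∀ᵐ ω ∂P, f c ω = max (f a ω) (f b ω) := by
    intro a ha b hb
    set T : Set Ω := {ω | f a ω ≤ f b ω} with hTdef
    have hTm : MeasurableSet T := measurableSet_le (hfmeas a ha) (hfmeas b hb)
    set A : ℕ → Set Ω := fun n => if n = 0 then T else if n = 1 then Tᶜ else ∅ with hA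
    set yseq : ℕ → Ω → EuclideanSpace ℝ (Fin d) := fun n => if n = 0 then b else a with hy
    set g : Ω → EuclideanSpace ℝ (Fin d) := fun ω => if ω ∈ T then b ω else a ω with hg
    have hpart : IsCountablePartition A := by
      refine ⟨?_, ?_, ?_⟩
      · intro n
        by_cases h0 : n = 0
        · simpa [hA, h0] using hTm
        · by_cases h1 : n = 1
          · simpa [hA, h0, h1] using hTm.compl
          · simp [hA, h0, h1]
      · intro i j hij
        simp only [Function.onFun]
        rcases Nat.eq_zero_or_pos i with hi | hi
        · subst hi
          rcases Nat.eq_zero_or_pos j with hj | hj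
          · exact absurd hj.symm hij
          · by_cases hj1 : j = 1
            · simp [hA, hj1, disjoint_compl_right]
            · simp [hA, Nat.pos_iff_ne_zero.mp hj, hj1]
        · by_cases hi1 : i = 1
          · rcases Nat.eq_zero_or_pos j with hj | hj
            · simp [hA, hi1, hj, disjoint_compl_left]
            · by_cases hj1 : j = 1
              · exact absurd (hi1.trans hj1.symm) hij
              · simp [hA, Nat.pos_iff_ne_zero.mp hj, hj1]
          · simp [hA, Nat.pos_iff_ne_zero.mp hi, hi1]
      · apply Set.eq_univ_of_forall
        intro ω
        by_cases hω : ω ∈ T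
        · exact Set.mem_iUnion.2 ⟨0, by simpa [hA] using hω⟩
        · exact Set.mem_iUnion.2 ⟨1, by simpa [hA] using hω⟩
    have hyG : ∀ n, yseq n ∈ G := by
      intro n; by_cases h : n = 0 <;> simp [hy, h, ha, hb]
    have hgA : ∀ n, ∀ ω ∈ A n, g ω = yseq n ω := by
      intro n ω hω
      by_cases h0 : n = 0
      · subst h0
        simp only [hA, if_pos rfl] at hω
        simp [hg, hy, hω]
      · by_cases h1 : n = 1
        · subst h1
          simp only [hA] at hω
          norm_num at hω
          simp [hg, hy, hω]
        · simp [hA, h0, h1] at hω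
    have hgG : g ∈ G := hstable yseq hyG A hpart g hgA
    have h0 := hfstable yseq hyG A hpart g hgA hgG 0
    have h1 := hfstable yseq hyG A hpart g hgA hgG 1
    refine ⟨g, hgG, ?_⟩
    filter_upwards [h0, h1] with ω h0 h1
    by_cases hω : ω ∈ T
    · have := h0 (by simpa [hA] using hω)
      rw [this]
      have hab : f a ω ≤ f b ω := hω
      simp [hy, max_eq_right hab]
    · have hmem : ω ∈ A 1 := by simp [hA]; exact hω
      have := h1 hmem
      rw [this]
      have hab : f b ω ≤ f a ω := (le_of_not_ge hω)
      simp [hy, max_eq_left hab]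
  choose comb hcombG hcombf using hmax
  -- choose a maximizing sequence
  have hc : ∀ n : ℕ, ∃ c, c ∈ G ∧ α - 1 / (n + 1) < I c := by
    intro n
    have h1 : α - 1 / (n + 1) < α := by
      have : (0:ℝ) < 1 / (n + 1) := by positivity
      linarith
    obtain ⟨s, hs, hlt⟩ := exists_lt_of_lt_csSup hSne h1
    obtain ⟨c, hcG, rfl⟩ := hs
    exact ⟨c, hcG, hlt⟩
  choose c hcG hcI using hc
  -- make it increasing
  let X : ℕ → {g : Ω → EuclideanSpace ℝ (Fin d) // g ∈ G} := fun n =>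
    Nat.rec ⟨c 0, hcG 0⟩
      (fun m p => ⟨comb (c (m + 1)) (hcG (m + 1)) p.1 p.2,
        hcombG (c (m + 1)) (hcG (m + 1)) p.1 p.2⟩) n
  set x : ℕ → Ω → EuclideanSpace ℝ (Fin d) := fun n => (X n).1 with hxdef
  have hxG : ∀ n, x n ∈ G := fun n => (X n).2
  have hxsucc : ∀ n, ∀ᵐ ω ∂P, f (x (n + 1)) ω = max (f (c (n + 1)) ω) (f (x n) ω) :=
    fun n => hcombf (c (n + 1)) (hcG (n + 1)) (x n) (hxG n)
  have hmono : ∀ᵐ ω ∂P, ∀ m n, m ≤ n → f (x m) ω ≤ f (x n) ω := by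
    filter_upwards [ae_all_iff.2 hxsucc] with ω hω
    intro m n hmn
    exact monotone_nat_of_le_succ (f := fun k => f (x k) ω)
      (fun k => by show f (x k) ω ≤ f (x (k + 1)) ω; rw [hω k]; exact le_max_right _ _) hmn
  have hIx : ∀ n, α - 1 / (n + 1) < I (x n) := by
    intro n
    refine lt_of_lt_of_le (hcI n) ?_
    cases n with
    | zero => exact le_refl _
    | succ m =>
      refine integral_mono_ae (hint (c (m + 1)) (hcG (m + 1))) (hint (x (m + 1)) (hxG (m + 1))) ?_
      filter_upwards [hxsucc m] with ω h
      refine Real.arctan_strictMono.monotone ?_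
      rw [h]; exact le_max_left _ _
  -- random compactness
  obtain ⟨nk, hnkm, hnkmono, y, hyG, hconv⟩ := hcompact x hxG
  set z : ℕ → Ω → EuclideanSpace ℝ (Fin d) := fun k ω => x (nk k ω) ω with hzdef
  have hApart : ∀ k, IsCountablePartition (fun m => nk k ⁻¹' {m}) := by
    intro k
    refine ⟨fun m => (hnkm k) (measurableSet_singleton m), ?_, ?_⟩
    · intro i j hij
      simp only [Function.onFun]
      exact Set.disjoint_left.2 fun ω hi hj =>
        hij ((Set.mem_singleton_iff.mp hi).symm.trans (Set.mem_singleton_iff.mp hj))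
    · exact Set.eq_univ_of_forall fun ω => Set.mem_iUnion.2 ⟨nk k ω, rfl⟩
  have hzA : ∀ k, ∀ m, ∀ ω ∈ (fun m => nk k ⁻¹' {m}) m, z k ω = x m ω := by
    intro k m ω hω
    have : nk k ω = m := Set.mem_singleton_iff.mp hω
    simp only [hzdef, this]
  have hzG : ∀ k, z k ∈ G := fun k => hstable x hxG _ (hApart k) (z k) (hzA k)
  have hfz : ∀ k, ∀ᵐ ω ∂P, f (z k) ω = f (x (nk k ω)) ω := by
    intro k
    filter_upwards [ae_all_iff.2
      (fun m => hfstable x hxG _ (hApart k) (z k) (hzA k) (hzG k) m)] with ω hω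
    exact hω (nk k ω) rfl
  have hnk_ge : ∀ k ω, k ≤ nk k ω := by
    intro k ω
    induction k with
    | zero => exact Nat.zero_le _
    | succ m ih => exact Nat.succ_le_of_lt (Nat.lt_of_le_of_lt ih (hnkmono m ω))
  have hconvf : TendstoInMeasure P (fun k => f (z k)) atTop (f y) :=
    hfcont y hyG z hzG hconv
  obtain ⟨ns, hnsmono, haetend⟩ := hconvf.exists_seq_tendsto_ae
  have hylow : ∀ k, ∀ᵐ ω ∂P, f (x k) ω ≤ f y ω := by
    intro k
    filter_upwards [haetend, hmono, ae_all_iff.2 hfz] with ω htend hmω hfzω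
    refine ge_of_tendsto htend ?_
    refine eventually_atTop.2 ⟨k, fun j hj => ?_⟩
    calc f (x k) ω ≤ f (x (ns j)) ω := hmω k (ns j) (hj.trans (hnsmono.le_apply))
      _ ≤ f (x (nk (ns j) ω)) ω := hmω _ _ (hnk_ge _ ω)
      _ = f (z (ns j)) ω := (hfzω (ns j)).symm
  have hIy_ge : ∀ k : ℕ, α - 1 / (k + 1) ≤ I y := by
    intro k
    refine (hIx k).le.trans ?_
    refine integral_mono_ae (hint _ (hxG k)) (hint _ hyG) ?_
    filter_upwards [hylow k] with ω h
    exact Real.arctan_strictMono.monotone h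
  have hIyα : α ≤ I y := by
    have h0 : Tendsto (fun k : ℕ => α - 1 / ((k : ℝ) + 1)) atTop (nhds (α - 0)) :=
      tendsto_const_nhds.sub tendsto_one_div_add_atTop_nhds_zero_nat
    rw [sub_zero] at h0
    exact le_of_tendsto h0 (Filter.Eventually.of_forall hIy_ge)
  -- conclusion
  refine ⟨y, hyG, fun x' hx' => ?_⟩
  set w := comb x' hx' y hyG with hw
  have hwG : w ∈ G := hcombG x' hx' y hyG
  have hwf : ∀ᵐ ω ∂P, f w ω = max (f x' ω) (f y ω) := hcombf x' hx' y hyG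
  have h1 : I w ≤ I y := (le_csSup hSbdd ⟨w, hwG, rfl⟩).trans hIyα
  have h2 : ∀ᵐ ω ∂P, Real.arctan (f y ω) ≤ Real.arctan (f w ω) := by
    filter_upwards [hwf] with ω h
    refine Real.arctan_strictMono.monotone ?_
    rw [h]; exact le_max_right _ _
  have hintw := hint w hwG
  have hinty := hint y hyG
  have hnn : 0 ≤ᵐ[P] fun ω => Real.arctan (f w ω) - Real.arctan (f y ω) :=
    h2.mono fun ω h => sub_nonneg.2 h
  have hintd : Integrable (fun ω => Real.arctan (f w ω) - Real.arctan (f y ω)) P :=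
    hintw.sub hinty
  have hz0 : ∫ ω, (Real.arctan (f w ω) - Real.arctan (f y ω)) ∂P = 0 := by
    refine le_antisymm ?_ (integral_nonneg_of_ae hnn)
    rw [integral_sub hintw hinty]
    have : I w ≤ I y := h1
    simp only [hIdef] at this
    linarith
  have h3 := (integral_eq_zero_iff_of_nonneg_ae hnn hintd).1 hz0
  filter_upwards [h3, hwf] with ω h3 hwfω
  have heq : Real.arctan (f w ω) = Real.arctan (f y ω) := by
    have : Real.arctan (f w ω) - Real.arctan (f y ω) = 0 := h3
    linarith
  have hfeq : f w ω = f y ω := Real.arctan_injective heq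
  rw [hwfω] at hfeq
  calc f x' ω ≤ max (f x' ω) (f y ω) := le_max_left _ _
    _ = f y ω := hfeq
end

section
/- Let (Ω, F, P) be a probability space, E = L⁰(F, ℝ^d), and G a σ-stable subset. Fix measurable ε with ε(ω) > 0 a.e. Suppose for the plain real number ε₀ > 0 there exist a countable measurable partition (A_n) of Ω and finite subsets G_n ⊂ G such that for every x ∈ G and every n, essinf{ |1_{A_n}(x − y)| : y ∈ σ(G_n)} < ε₀ a.e. on A_n, where σ(G_n) is the set of countable measurable pastings of elements of G_n. Then G is a.s. bounded: there is measurable ξ ≥ 0 with |x(ω)| ≤ ξ(ω) a.e. for all x ∈ G. -/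
open MeasureTheory Filter

/-- The σ-stable hull of a set of random points: all countable measurable pastings. -/
def sigmaHull {Ω : Type*} [MeasurableSpace Ω] {E : Type*}
    (S : Set (Ω → E)) : Set (Ω → E) :=
  {g | ∃ (y : ℕ → Ω → E) (A : ℕ → Set Ω),
    (∀ k, y k ∈ S) ∧ IsCountablePartition A ∧ ∀ k, ∀ ω ∈ A k, g ω = y k ω}

/-!
On each piece `A n`, the essential infimum of the distances from `x` to the pastings of the
finite set `Gfin n` is the pointwise minimum of the distances from `x` to its finitely many
elements, since a pasting takes at each `ω` the value of one of them. Random total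
boundedness thus puts `x ω` within `ε₀` of some `z ω`, `z ∈ Gfin n`, for a.e. `ω ∈ A n`,
so `‖x ω‖ ≤ ε₀ + max_{z ∈ Gfin n} ‖z ω‖` there, a bound independent of `x`.
-/

theorem Finset.measurable_inf' {α δ ι : Type*} [MeasurableSpace α] [MeasurableSpace δ]
    [SemilatticeInf α] [MeasurableInf₂ α] {s : Finset ι} (hs : s.Nonempty) {f : ι → δ → α}
    (hf : ∀ i ∈ s, Measurable (f i)) : Measurable (s.inf' hs f) :=
  Finset.inf'_induction hs _ (fun _f hf _g hg => hf.inf hg) hf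

theorem norm_le_add_sup'_of_inf'_norm_sub_lt {E ι : Type*} [SeminormedAddCommGroup E]
    {s : Finset ι} (hs : s.Nonempty) {v : E} {u : ι → E} {ε : ℝ}
    (h : s.inf' hs (fun i => ‖v - u i‖) < ε) : ‖v‖ ≤ ε + s.sup' hs (fun i => ‖u i‖) := by
  obtain ⟨i, hi, hmin⟩ := s.exists_mem_eq_inf' hs fun i => ‖v - u i‖
  rw [hmin] at h
  calc ‖v‖ ≤ ‖v - u i‖ + ‖u i‖ := norm_le_norm_sub_add v (u i)
    _ ≤ ε + s.sup' hs (fun i => ‖u i‖) :=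
      add_le_add h.le (s.le_sup' (fun i => ‖u i‖) hi)

namespace IsCountablePartition

variable {Ω : Type*} [MeasurableSpace Ω] {A : ℕ → Set Ω}

theorem exists_mem (hA : IsCountablePartition A) (ω : Ω) : ∃ n, ω ∈ A n :=
  Set.mem_iUnion.1 (hA.2.2 ▸ Set.mem_univ ω)

theorem exists_measurable_paste {β : Type*} [MeasurableSpace β] (hA : IsCountablePartition A)
    {f : ℕ → Ω → β} (hf : ∀ n, Measurable (f n)) :
    ∃ g : Ω → β, Measurable g ∧ ∀ n, ∀ ω ∈ A n, g ω = f n ω := by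
  classical
  refine ⟨fun ω => f (Nat.find (hA.exists_mem ω)) ω,
    Measurable.find (p := fun n ω => ω ∈ A n) hf hA.1 hA.exists_mem, fun n ω hω => ?_⟩
  have hfind : ω ∈ A (Nat.find (hA.exists_mem ω)) := Nat.find_spec (hA.exists_mem ω)
  simp only [hA.2.1.eq (Set.not_disjoint_iff.2 ⟨ω, hfind, hω⟩)]

theorem ite_zero_univ :
    IsCountablePartition fun k : ℕ => if k = 0 then (Set.univ : Set Ω) else ∅ := by
  refine ⟨fun n => by dsimp only; split_ifs <;> simp, fun i j hij => ?_, ?_⟩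
  · simp only [Function.onFun]
    split_ifs <;> simp_all
  · exact Set.eq_univ_of_forall fun ω => Set.mem_iUnion.2 ⟨0, by simp⟩

end IsCountablePartition

section SigmaHull

variable {Ω E : Type*} [MeasurableSpace Ω]

theorem subset_sigmaHull (S : Set (Ω → E)) : S ⊆ sigmaHull S := fun z hz =>
  ⟨fun _ => z, _, fun _ => hz, IsCountablePartition.ite_zero_univ, fun _ _ _ => rfl⟩

theorem exists_apply_eq_of_mem_sigmaHull {S : Set (Ω → E)} {g : Ω → E} (hg : g ∈ sigmaHull S)
    (ω : Ω) : ∃ z ∈ S, g ω = z ω := by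
  obtain ⟨y, B, hyS, hB, hgy⟩ := hg
  obtain ⟨k, hk⟩ := hB.exists_mem ω
  exact ⟨y k, hyS k, hgy k ω hk⟩

variable [NormedAddCommGroup E] [MeasurableSpace E] [MeasurableSub₂ E] [OpensMeasurableSpace E]

theorem isEssInf_finset_inf'_dist_sigmaHull (P : Measure Ω) {A : Set Ω} (hA : MeasurableSet A)
    {x : Ω → E} (hx : Measurable x) {T : Finset (Ω → E)} (hT : T.Nonempty)
    (hTmeas : ∀ z ∈ T, Measurable z) :
    let δ := fun ω => T.inf' hT fun z => ‖A.indicator (fun ω' => x ω' - z ω') ω‖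
    Measurable δ ∧
      (∀ y ∈ sigmaHull (T : Set (Ω → E)), ∀ᵐ ω ∂P,
        δ ω ≤ ‖A.indicator (fun ω' => x ω' - y ω') ω‖) ∧
      (∀ δ' : Ω → ℝ, Measurable δ' →
        (∀ y ∈ sigmaHull (T : Set (Ω → E)), ∀ᵐ ω ∂P,
          δ' ω ≤ ‖A.indicator (fun ω' => x ω' - y ω') ω‖) →
        ∀ᵐ ω ∂P, δ' ω ≤ δ ω) := by
  intro δ
  refine ⟨?_, fun y hy => Eventually.of_forall fun ω => ?_, fun δ' _ hδ' => ?_⟩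
  · convert T.measurable_inf' hT fun z hz => ((hx.sub (hTmeas z hz)).indicator hA).norm
    ext ω; rw [Finset.inf'_apply]; rfl
  · obtain ⟨z, hz, hyz⟩ := exists_apply_eq_of_mem_sigmaHull hy ω
    refine (T.inf'_le _ hz).trans_eq ?_
    by_cases hω : ω ∈ A <;> simp [hω, hyz]
  · have hle : ∀ᵐ ω ∂P, ∀ z ∈ T, δ' ω ≤ ‖A.indicator (fun ω' => x ω' - z ω') ω‖ :=
      (eventually_all_finset T).2 fun z hz => hδ' z (subset_sigmaHull _ hz)
    filter_upwards [hle] with ω hω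
    exact T.le_inf' hT _ hω

end SigmaHull

theorem random_totally_bounded_implies_as_bounded_general
    {Ω : Type*} [MeasurableSpace Ω] (P : Measure Ω)
    (d : ℕ) (G : Set (Ω → EuclideanSpace ℝ (Fin d)))
    (hGmeas : ∀ x ∈ G, Measurable x)
    (ε₀ : ℝ) (hε₀ : 0 < ε₀)
    (A : ℕ → Set Ω) (hA : IsCountablePartition A)
    (Gfin : ℕ → Set (Ω → EuclideanSpace ℝ (Fin d)))
    (hGfin : ∀ n, (Gfin n).Finite ∧ (Gfin n).Nonempty ∧ Gfin n ⊆ G)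
    -- random total boundedness: any essential infimum of the random distances from
    -- `1_{A n}·x` to `1_{A n}·σ(Gfin n)` is `< ε₀` a.e. on `A n`
    (htb : ∀ x ∈ G, ∀ n, ∀ δ : Ω → ℝ, Measurable δ →
      (∀ y ∈ sigmaHull (Gfin n), ∀ᵐ ω ∂P,
        δ ω ≤ ‖(A n).indicator (fun ω' => x ω' - y ω') ω‖) →
      (∀ δ' : Ω → ℝ, Measurable δ' →
        (∀ y ∈ sigmaHull (Gfin n), ∀ᵐ ω ∂P,
          δ' ω ≤ ‖(A n).indicator (fun ω' => x ω' - y ω') ω‖) →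
        ∀ᵐ ω ∂P, δ' ω ≤ δ ω) →
      ∀ᵐ ω ∂P, ω ∈ A n → δ ω < ε₀) :
    ∃ ξ : Ω → ℝ, Measurable ξ ∧ (∀ ω, 0 ≤ ξ ω) ∧
      ∀ x ∈ G, ∀ᵐ ω ∂P, ‖x ω‖ ≤ ξ ω := by
  choose T hT using fun n => (hGfin n).1.exists_finset_coe
  obtain rfl : Gfin = fun n => ↑(T n) := funext fun n => (hT n).symm
  have hTne n : (T n).Nonempty := Finset.coe_nonempty.1 (hGfin n).2.1
  have hTmeas n : ∀ z ∈ T n, Measurable z := fun z hz => hGmeas z ((hGfin n).2.2 hz)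
  let M n ω := (T n).sup' (hTne n) fun z => ‖z ω‖
  have hMmeas n : Measurable (M n) := by
    convert (T n).measurable_sup' (hTne n) fun z hz => (hTmeas n z hz).norm
    ext ω; rw [Finset.sup'_apply]
  obtain ⟨ξ, hξmeas, hξ⟩ := hA.exists_measurable_paste fun n => measurable_const.add (hMmeas n)
  refine ⟨ξ, hξmeas, fun ω => ?_, fun x hx => ?_⟩
  · obtain ⟨n, hn⟩ := hA.exists_mem ω
    obtain ⟨z, hz⟩ := hTne n
    rw [hξ n ω hn]
    exact add_nonneg hε₀.le ((norm_nonneg _).trans ((T n).le_sup' (fun z => ‖z ω‖) hz))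
  have hclose : ∀ᵐ ω ∂P, ∀ n, ω ∈ A n →
      ((T n).inf' (hTne n) fun z => ‖(A n).indicator (fun ω' => x ω' - z ω') ω‖) < ε₀ :=
    ae_all_iff.2 fun n => by
      obtain ⟨hmeas, hlower, hgreatest⟩ :=
        isEssInf_finset_inf'_dist_sigmaHull P (hA.1 n) (hGmeas x hx) (hTne n) (hTmeas n)
      exact htb x hx n _ hmeas hlower hgreatest
  filter_upwards [hclose] with ω hω
  obtain ⟨n, hn⟩ := hA.exists_mem ω
  have hlt := hω n hn
  simp only [Set.indicator_of_mem hn] at hlt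
  exact (hξ n ω hn).symm ▸ norm_le_add_sup'_of_inf'_norm_sub_lt (hTne n) hlt

/-- Lemma 2.7(6): a random totally bounded set is a.s. bounded. -/
theorem random_totally_bounded_implies_as_bounded
    {Ω : Type*} [MeasurableSpace Ω] (P : Measure Ω) [IsProbabilityMeasure P]
    (d : ℕ) (G : Set (Ω → EuclideanSpace ℝ (Fin d)))
    (hne : G.Nonempty) (hGmeas : ∀ x ∈ G, Measurable x)
    (hstable : ∀ (y : ℕ → Ω → EuclideanSpace ℝ (Fin d)), (∀ n, y n ∈ G) →
      ∀ (A : ℕ → Set Ω), IsCountablePartition A →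
      ∀ g : Ω → EuclideanSpace ℝ (Fin d), (∀ n, ∀ ω ∈ A n, g ω = y n ω) → g ∈ G)
    (ε₀ : ℝ) (hε₀ : 0 < ε₀)
    (A : ℕ → Set Ω) (hA : IsCountablePartition A)
    (Gfin : ℕ → Set (Ω → EuclideanSpace ℝ (Fin d)))
    (hGfin : ∀ n, (Gfin n).Finite ∧ (Gfin n).Nonempty ∧ Gfin n ⊆ G)
    -- random total boundedness: any essential infimum of the random distances from
    -- `1_{A n}·x` to `1_{A n}·σ(Gfin n)` is `< ε₀` a.e. on `A n`
    (htb : ∀ x ∈ G, ∀ n, ∀ δ : Ω → ℝ, Measurable δ →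
      (∀ y ∈ sigmaHull (Gfin n), ∀ᵐ ω ∂P,
        δ ω ≤ ‖(A n).indicator (fun ω' => x ω' - y ω') ω‖) →
      (∀ δ' : Ω → ℝ, Measurable δ' →
        (∀ y ∈ sigmaHull (Gfin n), ∀ᵐ ω ∂P,
          δ' ω ≤ ‖(A n).indicator (fun ω' => x ω' - y ω') ω‖) →
        ∀ᵐ ω ∂P, δ' ω ≤ δ ω) →
      ∀ᵐ ω ∂P, ω ∈ A n → δ ω < ε₀) :
    ∃ ξ : Ω → ℝ, Measurable ξ ∧ (∀ ω, 0 ≤ ξ ω) ∧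
      ∀ x ∈ G, ∀ᵐ ω ∂P, ‖x ω‖ ≤ ξ ω :=
  random_totally_bounded_implies_as_bounded_general P d G hGmeas ε₀ hε₀ A hA Gfin hGfin htb
end

section
/- Let (Ω, F, P) be a probability space and d, m ∈ ℕ. Let G_n = {x₁,…,x_m} ⊂ L⁰(F, ℝ^d). Then the L⁰-convex hull Conv_{L⁰}(G_n) = {Σᵢ ξᵢ xᵢ : ξᵢ measurable, ξᵢ ≥ 0 a.e., Σᵢ ξᵢ = 1 a.e.} is random sequentially compact: every sequence in it has a random subsequence (strictly increasing measurable indices) converging in probability to an element of Conv_{L⁰}(G_n). -/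
open MeasureTheory Filter Topology

/-- The `L⁰`-convex hull of finitely many random points. -/
def L0ConvexHull {Ω : Type*} [MeasurableSpace Ω] (m d : ℕ)
    (x : Fin m → Ω → EuclideanSpace ℝ (Fin d)) :
    Set (Ω → EuclideanSpace ℝ (Fin d)) :=
  {g | ∃ ξ : Fin m → Ω → ℝ,
    (∀ i, Measurable (ξ i)) ∧
    (∀ i, ∀ ω, 0 ≤ ξ i ω) ∧
    (∀ ω, ∑ i, ξ i ω = 1) ∧
    ∀ ω, g ω = ∑ i, ξ i ω • x i ω}

section Aux

variable {Ω : Type*} [MeasurableSpace Ω]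

/-- Composition with a measurable random index is measurable. -/
lemma measurable_comp_index {E : Type*} [MeasurableSpace E]
    (f : ℕ → Ω → E) (hf : ∀ n, Measurable (f n)) {u : Ω → ℕ} (hu : Measurable u) :
    Measurable fun ω => f (u ω) ω := by
  have h : Measurable fun p : Ω × ℕ => f p.2 p.1 :=
    measurable_from_prod_countable_left fun n => hf n
  exact h.comp (measurable_id.prodMk hu)

/-- Randomized Bolzano–Weierstrass for a `[0,1]`-valued sequence of measurable functions. -/
lemma exists_random_subseq (a : ℕ → Ω → ℝ) (ha : ∀ n, Measurable (a n))
    (h0 : ∀ n ω, 0 ≤ a n ω) (h1 : ∀ n ω, a n ω ≤ 1) :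
    ∃ (nk : ℕ → Ω → ℕ) (L : Ω → ℝ), (∀ k, Measurable (nk k)) ∧
      (∀ k ω, nk k ω < nk (k + 1) ω) ∧ Measurable L ∧
      ∀ ω, Tendsto (fun k => a (nk k ω) ω) atTop (𝓝 (L ω)) := by
  classical
  set L : Ω → ℝ := fun ω => limsup (fun n => a n ω) atTop with hL
  have hLmeas : Measurable L := Measurable.limsup ha
  have key : ∀ (ω : Ω) (N : ℕ) (ε : ℝ), 0 < ε → ∃ n, N < n ∧ |a n ω - L ω| < ε := by
    intro ω N ε hε
    have hbdd : IsBoundedUnder (· ≤ ·) atTop fun n => a n ω :=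
      isBoundedUnder_of ⟨1, fun n => h1 n ω⟩
    have hcob : IsCoboundedUnder (· ≤ ·) atTop fun n => a n ω :=
      IsBoundedUnder.isCoboundedUnder_le (isBoundedUnder_of ⟨0, fun n => h0 n ω⟩)
    have hfreq : ∃ᶠ n in atTop, L ω - ε < a n ω :=
      frequently_lt_of_lt_limsup hcob
        (by linarith [hL ▸ (rfl : L ω = limsup (fun n => a n ω) atTop)])
    have hev : ∀ᶠ n in atTop, a n ω < L ω + ε :=
      eventually_lt_of_limsup_lt
        (by linarith [hL ▸ (rfl : L ω = limsup (fun n => a n ω) atTop)]) hbdd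
    have := (hfreq.and_eventually (hev.and (eventually_gt_atTop N))).exists
    obtain ⟨n, hn1, hn2, hn3⟩ := this
    exact ⟨n, hn3, by rw [abs_lt]; constructor <;> linarith⟩
  have exP : ∀ (k : ℕ) (N : ℕ) (ω : Ω), ∃ n, N < n ∧ |a n ω - L ω| < 1 / (k + 1) := by
    intro k N ω
    exact key ω N (1 / (k + 1)) (by positivity)
  have measP : ∀ (k N : ℕ) (u : Ω → ℕ), Measurable u →
      Measurable fun ω => Nat.find (exP k (u ω) ω) := by
    intro k N u hu
    have hp : ∀ j, MeasurableSet {ω | u ω < j ∧ |a j ω - L ω| < 1 / (k + 1)} := by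
      intro j
      refine (measurableSet_lt hu measurable_const).inter ?_
      exact measurableSet_lt ((ha j).sub hLmeas).abs measurable_const
    exact measurable_find (fun ω => exP k (u ω) ω) hp
  let F : ℕ → {f : Ω → ℕ // Measurable f} := fun k =>
    Nat.rec ⟨fun ω => Nat.find (exP 0 0 ω), measP 0 0 (fun _ => 0) measurable_const⟩
      (fun k ih => ⟨fun ω => Nat.find (exP (k + 1) (ih.1 ω) ω), measP (k + 1) 0 ih.1 ih.2⟩) k
  refine ⟨fun k => (F k).1, L, fun k => (F k).2, ?_, hLmeas, ?_⟩
  · intro k ω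
    exact (Nat.find_spec (exP (k + 1) ((F k).1 ω) ω)).1
  · intro ω
    have hdist : ∀ k, |a ((F k).1 ω) ω - L ω| < 1 / (k + 1) := by
      intro k
      cases k with
      | zero => exact (Nat.find_spec (exP 0 0 ω)).2
      | succ k => exact (Nat.find_spec (exP (k + 1) ((F k).1 ω) ω)).2
    rw [tendsto_iff_dist_tendsto_zero]
    refine squeeze_zero (fun k => dist_nonneg) (fun k => ?_)
      tendsto_one_div_add_atTop_nhds_zero_nat
    rw [Real.dist_eq]
    exact (hdist k).le

/-- Randomized Bolzano–Weierstrass, simultaneously for finitely many coordinates. -/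
lemma exists_random_subseq_multi (m : ℕ) (ξ : ℕ → Fin m → Ω → ℝ)
    (hmeas : ∀ n i, Measurable (ξ n i)) (h0 : ∀ n i ω, 0 ≤ ξ n i ω)
    (h1 : ∀ n i ω, ξ n i ω ≤ 1) :
    ∃ nk : ℕ → Ω → ℕ, (∀ k, Measurable (nk k)) ∧ (∀ k ω, nk k ω < nk (k + 1) ω) ∧
      ∀ i, ∃ L : Ω → ℝ, Measurable L ∧
        ∀ ω, Tendsto (fun k => ξ (nk k ω) i ω) atTop (𝓝 (L ω)) := by
  have main : ∀ j : ℕ, ∃ nk : ℕ → Ω → ℕ,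
      (∀ k, Measurable (nk k)) ∧ (∀ k ω, nk k ω < nk (k + 1) ω) ∧
      ∀ i : Fin m, (i : ℕ) < j → ∃ L : Ω → ℝ, Measurable L ∧
        ∀ ω, Tendsto (fun k => ξ (nk k ω) i ω) atTop (𝓝 (L ω)) := by
    intro j
    induction j with
    | zero =>
      exact ⟨fun k _ => k, fun k => measurable_const, fun k ω => Nat.lt_succ_self k,
        fun i hi => absurd hi (Nat.not_lt_zero _)⟩
    | succ j ih =>
      obtain ⟨nk, hnkmeas, hnkmono, hconv⟩ := ih
      by_cases hj : j < m
      · set i0 : Fin m := ⟨j, hj⟩ with hi0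
        obtain ⟨mk, L0, hmkmeas, hmkmono, hL0meas, hconv0⟩ :=
          exists_random_subseq (fun k ω => ξ (nk k ω) i0 ω)
            (fun k => measurable_comp_index (fun n => ξ n i0) (fun n => hmeas n i0) (hnkmeas k))
            (fun k ω => h0 _ _ _) (fun k ω => h1 _ _ _)
        refine ⟨fun k ω => nk (mk k ω) ω, ?_, ?_, ?_⟩
        · intro k; exact measurable_comp_index nk hnkmeas (hmkmeas k)
        · intro k ω
          exact (strictMono_nat_of_lt_succ fun n => hnkmono n ω) (hmkmono k ω)
        · intro i hi
          rcases Nat.lt_succ_iff_lt_or_eq.mp hi with hlt | heq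
          · obtain ⟨L, hLmeas, hLt⟩ := hconv i hlt
            refine ⟨L, hLmeas, fun ω => ?_⟩
            have hmk : Tendsto (fun k => mk k ω) atTop atTop :=
              (strictMono_nat_of_lt_succ fun k => hmkmono k ω).tendsto_atTop
            exact (hLt ω).comp hmk
          · have : i = i0 := Fin.ext heq
            subst this
            exact ⟨L0, hL0meas, fun ω => hconv0 ω⟩
      · refine ⟨nk, hnkmeas, hnkmono, fun i hi => hconv i ?_⟩
        exact lt_of_lt_of_le i.isLt (not_lt.mp hj)
  obtain ⟨nk, h1', h2', h3'⟩ := main m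
  exact ⟨nk, h1', h2', fun i => h3' i i.isLt⟩

end Aux

/-- The `L⁰`-convex hull of finitely many random points is random sequentially compact
(used inside the proof of Corollary 2.11). -/
theorem L0_convex_hull_random_sequentially_compact
    {Ω : Type*} [MeasurableSpace Ω] (P : Measure Ω) [IsProbabilityMeasure P]
    (m d : ℕ) (hm : 0 < m)
    (x : Fin m → Ω → EuclideanSpace ℝ (Fin d)) (hxmeas : ∀ i, Measurable (x i))
    (y : ℕ → Ω → EuclideanSpace ℝ (Fin d))
    (hy : ∀ n, y n ∈ L0ConvexHull m d x) :
    ∃ nk : ℕ → Ω → ℕ,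
      (∀ k, Measurable (nk k)) ∧
      (∀ k, ∀ ω, nk k ω < nk (k + 1) ω) ∧
      ∃ z ∈ L0ConvexHull m d x,
        TendstoInMeasure P (fun k ω => y (nk k ω) ω) atTop z := by
  choose ξ hξmeas hξ0 hξsum hξeq using hy
  have hξ1 : ∀ n i ω, ξ n i ω ≤ 1 := by
    intro n i ω
    calc ξ n i ω ≤ ∑ j, ξ n j ω :=
          Finset.single_le_sum (fun j _ => hξ0 n j ω) (Finset.mem_univ i)
      _ = 1 := hξsum n ω
  obtain ⟨nk, hnkmeas, hnkmono, hLall⟩ :=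
    exists_random_subseq_multi m ξ hξmeas hξ0 hξ1
  choose L hLmeas hLtend using hLall
  set z : Ω → EuclideanSpace ℝ (Fin d) := fun ω => ∑ i, L i ω • x i ω with hz
  have hymeas : ∀ n, Measurable (y n) := by
    intro n
    have : y n = fun ω => ∑ i, ξ n i ω • x i ω := funext (hξeq n)
    rw [this]
    exact Finset.measurable_sum _ fun i _ => (hξmeas n i).smul (hxmeas i)
  have hptwise : ∀ ω, Tendsto (fun k => y (nk k ω) ω) atTop (𝓝 (z ω)) := by
    intro ω
    have heq : (fun k => y (nk k ω) ω) = fun k => ∑ i, ξ (nk k ω) i ω • x i ω :=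
      funext fun k => hξeq (nk k ω) ω
    rw [heq, hz]
    exact tendsto_finset_sum _ fun i _ => (hLtend i ω).smul tendsto_const_nhds
  refine ⟨nk, hnkmeas, hnkmono, z, ?_, ?_⟩
  · refine ⟨L, hLmeas, ?_, ?_, fun ω => rfl⟩
    · intro i ω
      exact ge_of_tendsto (hLtend i ω) (Eventually.of_forall fun k => hξ0 _ i ω)
    · intro ω
      have hsum : Tendsto (fun k => ∑ i, ξ (nk k ω) i ω) atTop (𝓝 (∑ i, L i ω)) :=
        tendsto_finset_sum _ fun i _ => hLtend i ω
      have hone : (fun k => ∑ i, ξ (nk k ω) i ω) = fun _ => (1 : ℝ) :=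
        funext fun k => hξsum (nk k ω) ω
      rw [hone] at hsum
      exact tendsto_nhds_unique hsum tendsto_const_nhds
  · refine tendstoInMeasure_of_tendsto_ae (fun k => ?_) (.of_forall hptwise)
    exact (measurable_comp_index y hymeas (hnkmeas k)).aestronglyMeasurable
end

section
/- Let (Ω, F, P) be a probability space. Equip L⁰(F, ℝ) with convergence in probability. Let G ⊂ L⁰(F, ℝ) be σ-stable and complete for convergence in probability. Then G is 'stably complete': every stable Cauchy net indexed by measurable ℕ-valued functions converges. Concretely: suppose x : L⁰(ℕ) → G is σ-stable (x(Σ_k 1_{A_k} n_k) = Σ_k 1_{A_k} x(n_k)) and for every measurable ε > 0 a.e. there is n₀ ∈ L⁰(ℕ) with |x(n) − x(m)| ≤ ε a.e. whenever n, m ≥ n₀ a.e. Then there exists y ∈ G such that for every measurable ε > 0 a.e. there is n₀ ∈ L⁰(ℕ) with |x(n) − y| ≤ ε a.e. for all n ≥ n₀ a.e. -/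
open MeasureTheory Filter

/-- Theorem 4.1, (1) ⇒ (3) for `E = L⁰(F, ℝ)`: a σ-stable set that is complete for
convergence in probability is stably complete. -/
theorem complete_in_probability_implies_stably_complete
    {Ω : Type*} [MeasurableSpace Ω] (P : Measure Ω) [IsProbabilityMeasure P]
    (G : Set (Ω → ℝ)) (hne : G.Nonempty) (hGmeas : ∀ x ∈ G, Measurable x)
    (hstable : ∀ (y : ℕ → Ω → ℝ), (∀ n, y n ∈ G) →
      ∀ (A : ℕ → Set Ω), IsCountablePartition A →
      ∀ g : Ω → ℝ, (∀ n, ∀ ω ∈ A n, g ω = y n ω) → g ∈ G)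
    -- G is complete for convergence in probability
    (hcomplete : ∀ x : ℕ → Ω → ℝ, (∀ n, x n ∈ G) →
      (∀ δ : ℝ, 0 < δ →
        Tendsto (fun q : ℕ × ℕ => P {ω | δ ≤ |x q.1 ω - x q.2 ω|}) atTop (nhds 0)) →
      ∃ y ∈ G, TendstoInMeasure P x atTop y)
    -- a stable net in G indexed by measurable ℕ-valued functions
    (x : (Ω → ℕ) → Ω → ℝ)
    (hxG : ∀ n : Ω → ℕ, Measurable n → x n ∈ G)
    (hxstable : ∀ (n : ℕ → Ω → ℕ), (∀ k, Measurable (n k)) →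
      ∀ (A : ℕ → Set Ω), IsCountablePartition A →
      ∀ m : Ω → ℕ, Measurable m → (∀ k, ∀ ω ∈ A k, m ω = n k ω) →
      ∀ k, ∀ᵐ ω ∂P, ω ∈ A k → x m ω = x (n k) ω)
    -- the stable net is Cauchy
    (hcauchy : ∀ ε : Ω → ℝ, Measurable ε → (∀ᵐ ω ∂P, 0 < ε ω) →
      ∃ n₀ : Ω → ℕ, Measurable n₀ ∧
        ∀ n m : Ω → ℕ, Measurable n → Measurable m →
          (∀ᵐ ω ∂P, n₀ ω ≤ n ω) → (∀ᵐ ω ∂P, n₀ ω ≤ m ω) →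
          ∀ᵐ ω ∂P, |x n ω - x m ω| ≤ ε ω) :
    ∃ y ∈ G, ∀ ε : Ω → ℝ, Measurable ε → (∀ᵐ ω ∂P, 0 < ε ω) →
      ∃ n₀ : Ω → ℕ, Measurable n₀ ∧
        ∀ n : Ω → ℕ, Measurable n → (∀ᵐ ω ∂P, n₀ ω ≤ n ω) →
          ∀ᵐ ω ∂P, |x n ω - y ω| ≤ ε ω := by
  classical
  have hpow : ∀ k : ℕ, (0 : ℝ) < (1 / 2) ^ k := fun k => by positivity
  -- For each k, get an index function n₀ k from the Cauchy property with ε = (1/2)^k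
  have hC : ∀ k : ℕ, ∃ n₀ : Ω → ℕ, Measurable n₀ ∧
      ∀ n m : Ω → ℕ, Measurable n → Measurable m →
        (∀ᵐ ω ∂P, n₀ ω ≤ n ω) → (∀ᵐ ω ∂P, n₀ ω ≤ m ω) →
        ∀ᵐ ω ∂P, |x n ω - x m ω| ≤ (1 / 2 : ℝ) ^ k := fun k =>
    hcauchy (fun _ => (1 / 2) ^ k) measurable_const (ae_of_all _ fun _ => hpow k)
  choose nn hnnmeas hnn using hC
  -- N k = running max of nn 0, ..., nn k
  set N : ℕ → Ω → ℕ := fun k ω =>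
    (Finset.range (k + 1)).sup' Finset.nonempty_range_add_one fun i => nn i ω with hN
  have hNmeas : ∀ k, Measurable (N k) := by
    intro k
    simp only [hN]
    exact Finset.measurable_range_sup'' fun i _ => hnnmeas i
  have hNge : ∀ j k : ℕ, j ≤ k → ∀ ω, nn j ω ≤ N k ω := by
    intro j k hjk ω
    simp only [hN]
    exact Finset.le_sup' (f := fun i => nn i ω) (Finset.mem_range.mpr (Nat.lt_succ_of_le hjk))
  -- the sequence k ↦ x (N k) is Cauchy in probability
  have hcs : ∀ δ : ℝ, 0 < δ →
      Tendsto (fun q : ℕ × ℕ => P {ω | δ ≤ |x (N q.1) ω - x (N q.2) ω|}) atTop (nhds 0) := by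
    intro δ hδ
    obtain ⟨k, hk⟩ := exists_pow_lt_of_lt_one hδ (by norm_num : (1 / 2 : ℝ) < 1)
    rw [show (0 : ENNReal) = (fun _ : ℕ × ℕ => (0 : ENNReal)) (k, k) from rfl]
    apply Tendsto.congr' _ tendsto_const_nhds
    rw [EventuallyEq, eventually_atTop]
    refine ⟨(k, k), fun q hq => ?_⟩
    have h1 : ∀ᵐ ω ∂P, |x (N q.1) ω - x (N q.2) ω| ≤ (1 / 2 : ℝ) ^ k := by
      refine hnn k (N q.1) (N q.2) (hNmeas _) (hNmeas _)
        (ae_of_all _ fun ω => hNge k q.1 hq.1 ω) (ae_of_all _ fun ω => hNge k q.2 hq.2 ω)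
    refine (measure_mono_null ?_ (ae_iff.mp h1)).symm
    intro ω hω
    simp only [Set.mem_setOf_eq] at hω ⊢
    exact not_le.mpr (lt_of_lt_of_le hk hω)
  obtain ⟨y, hyG, hytm⟩ := hcomplete (fun k => x (N k)) (fun k => hxG _ (hNmeas k)) hcs
  -- extract an a.e. convergent subsequence
  obtain ⟨φ, hφmono, hφae⟩ := hytm.exists_seq_tendsto_ae
  -- key estimate: any index function ≥ nn j gives |x p - y| ≤ (1/2)^j a.e.
  have hkey : ∀ (j : ℕ) (p : Ω → ℕ), Measurable p → (∀ᵐ ω ∂P, nn j ω ≤ p ω) →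
      ∀ᵐ ω ∂P, |x p ω - y ω| ≤ (1 / 2 : ℝ) ^ j := by
    intro j p hp hpge
    have h1 : ∀ᵐ ω ∂P, ∀ i : ℕ, j ≤ i → |x p ω - x (N i) ω| ≤ (1 / 2 : ℝ) ^ j := by
      rw [ae_all_iff]
      intro i
      by_cases hij : j ≤ i
      · filter_upwards [hnn j p (N i) hp (hNmeas i) hpge
          (ae_of_all _ fun ω => hNge j i hij ω)] with ω hω _
        exact hω
      · filter_upwards with ω h; exact absurd h hij
    filter_upwards [h1, hφae] with ω hω htend
    have htend' : Tendsto (fun i => |x p ω - x (N (φ i)) ω|) atTop (nhds (|x p ω - y ω|)) :=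
      ((continuous_abs.tendsto _).comp ((tendsto_const_nhds.sub htend))).comp tendsto_id
    refine le_of_tendsto htend' ?_
    filter_upwards [eventually_ge_atTop j] with i hi
    exact hω (φ i) (le_trans hi (hφmono.le_apply))
  refine ⟨y, hyG, ?_⟩
  intro ε hεmeas hεpos
  -- get the Cauchy index for ε/2
  obtain ⟨n₀', hn₀'meas, hn₀'⟩ := hcauchy (fun ω => ε ω / 2) (hεmeas.div_const 2)
    (by filter_upwards [hεpos] with ω h; linarith)
  -- define the random index k(ω) = least j with (1/2)^j ≤ ε ω / 2
  set p : ℕ → Ω → Prop := fun j ω => (1 / 2 : ℝ) ^ j ≤ ε ω / 2 ∨ ε ω ≤ 0 with hp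
  have hex : ∀ ω, ∃ j, p j ω := by
    intro ω
    by_cases h : 0 < ε ω
    · obtain ⟨j, hj⟩ := exists_pow_lt_of_lt_one (by linarith : (0:ℝ) < ε ω / 2)
        (by norm_num : (1 / 2 : ℝ) < 1)
      exact ⟨j, Or.inl hj.le⟩
    · exact ⟨0, Or.inr (not_lt.mp h)⟩
  have hpm : ∀ j, MeasurableSet {ω | p j ω} := by
    intro j
    exact ((measurableSet_le measurable_const (hεmeas.div_const 2)).union
      (measurableSet_le hεmeas measurable_const))
  set kfun : Ω → ℕ := fun ω => Nat.find (hex ω) with hkfun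
  have hkfunmeas : Measurable kfun := measurable_find hex hpm
  -- m j = max (n₀' , N j), and m = max (n₀', N (kfun ·))
  set mj : ℕ → Ω → ℕ := fun j ω => max (n₀' ω) (N j ω) with hmj
  have hmjmeas : ∀ j, Measurable (mj j) := fun j => (hn₀'meas.max (hNmeas j))
  set m : Ω → ℕ := fun ω => max (n₀' ω) (N (kfun ω) ω) with hm
  have hmmeas : Measurable m := by
    apply hn₀'meas.max
    exact Measurable.find hNmeas hpm hex
  -- partition by the value of kfun
  set A : ℕ → Set Ω := fun j => kfun ⁻¹' {j} with hA
  have hApart : IsCountablePartition A := by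
    refine ⟨fun j => hkfunmeas (measurableSet_singleton j), ?_, ?_⟩
    · intro i j hij
      simp only [Function.onFun, hA]
      exact Set.disjoint_left.mpr fun ω hi hj => hij
        (by simpa using hi.symm.trans (by simpa using hj))
    · ext ω; simp [hA]
  -- stability: x m = x (mj j) a.e. on A j
  have hst : ∀ j, ∀ᵐ ω ∂P, ω ∈ A j → x m ω = x (mj j) ω := by
    refine hxstable mj hmjmeas A hApart m hmmeas ?_
    intro j ω hω
    have : kfun ω = j := hω
    simp [hm, hmj, this]
  have hst' : ∀ᵐ ω ∂P, ∀ j, ω ∈ A j → x m ω = x (mj j) ω := by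
    rw [ae_all_iff]; exact hst
  -- |x (mj j) - y| ≤ (1/2)^j a.e., for all j
  have hmjy : ∀ᵐ ω ∂P, ∀ j, |x (mj j) ω - y ω| ≤ (1 / 2 : ℝ) ^ j := by
    rw [ae_all_iff]
    intro j
    exact hkey j (mj j) (hmjmeas j)
      (ae_of_all _ fun ω => le_trans (hNge j j le_rfl ω) (le_max_right _ _))
  refine ⟨m, hmmeas, ?_⟩
  intro n hnmeas hnge
  have hcau : ∀ᵐ ω ∂P, |x n ω - x m ω| ≤ ε ω / 2 :=
    hn₀' n m hnmeas hmmeas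
      (by filter_upwards [hnge] with ω h; exact le_trans (le_max_left _ _) h)
      (ae_of_all _ fun ω => le_max_left _ _)
  filter_upwards [hcau, hst', hmjy, hεpos] with ω h1 h2 h3 h4
  have hsp : p (kfun ω) ω := Nat.find_spec (hex ω)
  have hle : (1 / 2 : ℝ) ^ (kfun ω) ≤ ε ω / 2 := by
    rcases hsp with h | h
    · exact h
    · linarith
  have heq : x m ω = x (mj (kfun ω)) ω := h2 (kfun ω) rfl
  calc |x n ω - y ω| ≤ |x n ω - x m ω| + |x m ω - y ω| := abs_sub_le _ _ _
    _ ≤ ε ω / 2 + (1 / 2 : ℝ) ^ (kfun ω) := by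
        exact add_le_add h1 (by rw [heq]; exact h3 (kfun ω))
    _ ≤ ε ω := by linarith
end

section
/- Let (Ω, F, P) be a probability space, G ⊂ L⁰(F, ℝ^d) a σ-stable set closed under convergence in probability, and let α be measurable with 0 ≤ α(ω) < 1 a.e. Suppose S : G → G satisfies |S(x)(ω) − S(y)(ω)| ≤ α(ω)|x(ω) − y(ω)| a.e. for all x, y ∈ G. Then S has a unique fixed point in G. -/
open MeasureTheory Filter Topology

/-- The random contraction (Banach) fixed point theorem in `L⁰(F, ℝ^d)`. -/
theorem random_contraction_fixed_point
    {Ω : Type*} [MeasurableSpace Ω] (P : Measure Ω) [IsProbabilityMeasure P]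
    (d : ℕ) (G : Set (Ω → EuclideanSpace ℝ (Fin d)))
    (hne : G.Nonempty) (hGmeas : ∀ x ∈ G, Measurable x)
    (hstable : ∀ (y : ℕ → Ω → EuclideanSpace ℝ (Fin d)), (∀ n, y n ∈ G) →
      ∀ (A : ℕ → Set Ω), IsCountablePartition A →
      ∀ g : Ω → EuclideanSpace ℝ (Fin d), (∀ n, ∀ ω ∈ A n, g ω = y n ω) → g ∈ G)
    (hclosed : ∀ y : ℕ → Ω → EuclideanSpace ℝ (Fin d), (∀ n, y n ∈ G) →
      ∀ x : Ω → EuclideanSpace ℝ (Fin d), Measurable x →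
      TendstoInMeasure P y atTop x → x ∈ G)
    (α : Ω → ℝ) (hαmeas : Measurable α)
    (hα : ∀ᵐ ω ∂P, 0 ≤ α ω ∧ α ω < 1)
    (S : (Ω → EuclideanSpace ℝ (Fin d)) → Ω → EuclideanSpace ℝ (Fin d))
    (hSmaps : ∀ x ∈ G, S x ∈ G)
    (hScontr : ∀ x ∈ G, ∀ y ∈ G, ∀ᵐ ω ∂P, ‖S x ω - S y ω‖ ≤ α ω * ‖x ω - y ω‖) :
    ∃ x ∈ G, (S x =ᵐ[P] x) ∧ ∀ y ∈ G, S y =ᵐ[P] y → y =ᵐ[P] x := by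
  classical
  obtain ⟨x₀, hx₀⟩ := hne
  set f : ℕ → Ω → EuclideanSpace ℝ (Fin d) := fun n => S^[n] x₀ with hf
  have hfG : ∀ n, f n ∈ G := by
    intro n
    induction n with
    | zero => simpa [hf] using hx₀
    | succ n ih => simpa [hf, Function.iterate_succ_apply'] using hSmaps _ ih
  have hfsucc : ∀ n, f (n + 1) = S (f n) := fun n => by
    simp [hf, Function.iterate_succ_apply']
  have hcontr : ∀ᵐ ω ∂P, ∀ n,
      ‖S (f n) ω - S (f (n + 1)) ω‖ ≤ α ω * ‖f n ω - f (n + 1) ω‖ :=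
    ae_all_iff.2 fun n => hScontr (f n) (hfG n) (f (n + 1)) (hfG (n + 1))
  -- a.e. existence of a pointwise limit
  have hlim : ∀ᵐ ω ∂P, ∃ l, Tendsto (fun n => f n ω) atTop (𝓝 l) := by
    filter_upwards [hcontr, hα] with ω hω hαω
    have hbound : ∀ n, ‖f n ω - f (n + 1) ω‖ ≤ α ω ^ n * ‖f 0 ω - f 1 ω‖ := by
      intro n
      induction n with
      | zero => simp
      | succ n ih =>
        have h1 : ‖f (n + 1) ω - f (n + 2) ω‖ ≤ α ω * ‖f n ω - f (n + 1) ω‖ := by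
          have := hω n
          rwa [← hfsucc n, ← hfsucc (n + 1)] at this
        calc ‖f (n + 1) ω - f (n + 2) ω‖ ≤ α ω * ‖f n ω - f (n + 1) ω‖ := h1
          _ ≤ α ω * (α ω ^ n * ‖f 0 ω - f 1 ω‖) :=
              mul_le_mul_of_nonneg_left ih hαω.1
          _ = α ω ^ (n + 1) * ‖f 0 ω - f 1 ω‖ := by ring
    have hcauchy : CauchySeq (fun n => f n ω) := by
      refine cauchySeq_of_le_geometric (α ω) (‖f 0 ω - f 1 ω‖) hαω.2 fun n => ?_
      rw [dist_eq_norm]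
      calc ‖f n ω - f (n + 1) ω‖ ≤ α ω ^ n * ‖f 0 ω - f 1 ω‖ := hbound n
        _ = ‖f 0 ω - f 1 ω‖ * α ω ^ n := by ring
    exact cauchySeq_tendsto_of_complete hcauchy
  obtain ⟨x, hxmeas, hxlim⟩ :
      ∃ x : Ω → EuclideanSpace ℝ (Fin d), Measurable x ∧
        ∀ᵐ ω ∂P, Tendsto (fun n => f n ω) atTop (𝓝 (x ω)) :=
    measurable_limit_of_tendsto_metrizable_ae
      (fun n => (hGmeas _ (hfG n)).aemeasurable) hlim
  have hxG : G.Mem x := by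
    refine hclosed f hfG x hxmeas ?_
    exact tendstoInMeasure_of_tendsto_ae
      (fun n => (hGmeas _ (hfG n)).aestronglyMeasurable) hxlim
  refine ⟨x, hxG, ?_, ?_⟩
  · -- S x = x a.e.
    have hSx : ∀ᵐ ω ∂P, ∀ n, ‖S x ω - S (f n) ω‖ ≤ α ω * ‖x ω - f n ω‖ :=
      ae_all_iff.2 fun n => hScontr x hxG (f n) (hfG n)
    filter_upwards [hSx, hxlim, hα] with ω hSxω hxlimω hαω
    have h1 : Tendsto (fun n => f (n + 1) ω) atTop (𝓝 (x ω)) :=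
      hxlimω.comp (tendsto_add_atTop_nat 1)
    have h2 : Tendsto (fun n => f (n + 1) ω) atTop (𝓝 (S x ω)) := by
      rw [tendsto_iff_norm_sub_tendsto_zero]
      have hnorm : Tendsto (fun n => α ω * ‖x ω - f n ω‖) atTop (𝓝 (α ω * 0)) := by
        refine Tendsto.const_mul _ ?_
        rw [← show ‖x ω - x ω‖ = (0 : ℝ) by simp]
        exact (Tendsto.sub tendsto_const_nhds hxlimω).norm
      rw [mul_zero] at hnorm
      refine squeeze_zero (fun n => norm_nonneg _) (fun n => ?_) hnorm
      rw [hfsucc n, ← norm_neg]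
      simpa [neg_sub] using hSxω n
    exact tendsto_nhds_unique h2 h1
  · -- uniqueness
    intro y hyG hSy
    have hxy := hScontr x hxG y hyG
    have hSxfix : S x =ᵐ[P] x := by
      -- re-derive as above; instead use the first part result
      filter_upwards [ae_all_iff.2 fun n => hScontr x hxG (f n) (hfG n), hxlim, hα]
        with ω hSxω hxlimω hαω
      have h1 : Tendsto (fun n => f (n + 1) ω) atTop (𝓝 (x ω)) :=
        hxlimω.comp (tendsto_add_atTop_nat 1)
      have h2 : Tendsto (fun n => f (n + 1) ω) atTop (𝓝 (S x ω)) := by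
        rw [tendsto_iff_norm_sub_tendsto_zero]
        have hnorm : Tendsto (fun n => α ω * ‖x ω - f n ω‖) atTop (𝓝 (α ω * 0)) := by
          refine Tendsto.const_mul _ ?_
          rw [← show ‖x ω - x ω‖ = (0 : ℝ) by simp]
          exact (Tendsto.sub tendsto_const_nhds hxlimω).norm
        rw [mul_zero] at hnorm
        refine squeeze_zero (fun n => norm_nonneg _) (fun n => ?_) hnorm
        rw [hfsucc n, ← norm_neg]
        simpa [neg_sub] using hSxω n
      exact tendsto_nhds_unique h2 h1
    filter_upwards [hxy, hSy, hSxfix, hα] with ω h1 h2 h3 hαω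
    rw [h2, h3] at h1
    have hn : (0 : ℝ) ≤ ‖x ω - y ω‖ := norm_nonneg _
    have : ‖x ω - y ω‖ = 0 := by nlinarith [h1, hαω.2, hn]
    have hxy0 : x ω - y ω = 0 := by simpa using this
    have : x ω = y ω := by
      have := sub_eq_zero.mp hxy0
      exact this
    exact this.symm
end
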